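/- arXiv:2209.01834 — 6 statements merged into one kernel-verified Lean document; each statement's English description precedes it below -/
import Mathlib

section
/- Let K be a field, r and s positive integers, and Q ⊆ [r] × [s]. The quasi-independence ideal I_Q = ker(φ_Q) is generated by the binomials ∏_{i=1}^ℓ z_{j_i k_i} − ∏_{i=1}^ℓ z_{j_{i+1} k_i} (indices modulo ℓ) associated to the induced cycles j_1 − k_1 − j_2 − k_2 − ⋯ − j_ℓ − k_ℓ − j_1 of the bipartite graph G_Q. -/
open MvPolynomial

noncomputable def phiQ (K : Type*) [Field K] {σ τ : Type*} (Q : Set (σ × τ)) :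
    MvPolynomial Q K →ₐ[K] MvPolynomial (σ ⊕ τ) K :=
  aeval fun q => X (Sum.inl q.1.1) * X (Sum.inr q.1.2)

noncomputable def cycleBinomials (K : Type*) [Field K] {σ τ : Type*} (Q : Set (σ × τ)) :
    Set (MvPolynomial Q K) :=
  { f | ∃ (ℓ : ℕ) (j : Fin (ℓ + 2) → σ) (k : Fin (ℓ + 2) → τ),
      Function.Injective j ∧ Function.Injective k ∧
      (∀ a b, ((j a, k b) ∈ Q ↔ (b = a ∨ a = b + 1))) ∧
      ∃ (h1 : ∀ i, (j i, k i) ∈ Q) (h2 : ∀ i, (j (i + 1), k i) ∈ Q),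
        f = (∏ i, X (⟨(j i, k i), h1 i⟩ : Q)) - ∏ i, X (⟨(j (i + 1), k i), h2 i⟩ : Q) }

namespace Stmt1Aux

open Finsupp Sum
open scoped Classical

variable {K : Type*} [Field K] {σ τ : Type*}

/-- exponent weight of an edge -/
noncomputable def w (Q : Set (σ × τ)) (e : Q) : (σ ⊕ τ) →₀ ℕ :=
  Finsupp.single (inl e.1.1) 1 + Finsupp.single (inr e.1.2) 1

noncomputable def psi (Q : Set (σ × τ)) : (Q →₀ ℕ) →+ ((σ ⊕ τ) →₀ ℕ) :=
  Finsupp.liftAddHom fun e => (multiplesHom _ (w Q e))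

lemma psi_single (Q : Set (σ × τ)) (e : Q) (m : ℕ) :
    psi Q (Finsupp.single e m) = m • w Q e := by
  simp [psi]

lemma phiQ_monomial (Q : Set (σ × τ)) (u : Q →₀ ℕ) (c : K) :
    phiQ K Q (monomial u c) = monomial (psi Q u) c := by
  rw [phiQ, aeval_monomial]
  have h1 : ∀ e : Q, (X (Sum.inl e.1.1) * X (Sum.inr e.1.2) : MvPolynomial (σ ⊕ τ) K)
      = monomial (w Q e) 1 := by
    intro e
    rw [w, X, X, monomial_mul, one_mul]
  have : (u.prod fun e m => (X (Sum.inl e.1.1) * X (Sum.inr e.1.2) : MvPolynomial (σ ⊕ τ) K) ^ m)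
      = monomial (psi Q u) 1 := by
    rw [Finsupp.prod]
    have : ∀ e ∈ u.support, (X (Sum.inl e.1.1) * X (Sum.inr e.1.2) : MvPolynomial (σ ⊕ τ) K) ^ u e
        = monomial (u e • w Q e) 1 := by
      intro e _
      rw [h1, monomial_pow, one_pow]
    rw [Finset.prod_congr rfl this, ← monomial_sum_one]
    congr 1
  rw [this, algebraMap_eq, C_mul_monomial, mul_one]

lemma coeff_phiQ (Q : Set (σ × τ)) (f : MvPolynomial Q K) (d : (σ ⊕ τ) →₀ ℕ) :
    coeff d (phiQ K Q f) = ∑ u ∈ f.support.filter (fun u => psi Q u = d), coeff u f := by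
  classical
  conv_lhs => rw [f.as_sum, map_sum]
  rw [Finset.sum_filter]
  simp_rw [phiQ_monomial]
  rw [MvPolynomial.coeff_sum]
  refine Finset.sum_congr rfl fun u _ => ?_
  rw [coeff_monomial]

lemma ker_le_of_binomials (Q : Set (σ × τ)) (J : Ideal (MvPolynomial Q K))
    (hbin : ∀ u v : Q →₀ ℕ, psi Q u = psi Q v →
      (monomial u 1 : MvPolynomial Q K) - monomial v 1 ∈ J) :
    ∀ f : MvPolynomial Q K, phiQ K Q f = 0 → f ∈ J := by
  classical
  suffices H : ∀ n (f : MvPolynomial Q K), f.support.card ≤ n → phiQ K Q f = 0 → f ∈ J by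
    intro f hf; exact H f.support.card f le_rfl hf
  intro n
  induction n with
  | zero =>
    intro f hcard _
    have : f = 0 := by
      rwa [Nat.le_zero, Finset.card_eq_zero, MvPolynomial.support_eq_empty] at hcard
    simp [this]
  | succ n ih =>
    intro f hcard hker
    by_cases hf : f = 0
    · simp [hf]
    obtain ⟨u0, hu0⟩ := (MvPolynomial.support_nonempty.mpr hf)
    set T := f.support.filter (fun u => psi Q u = psi Q u0) with hT
    have hu0T : u0 ∈ T := by simp [hT, hu0]
    have hS : ∑ u ∈ T, coeff u f = 0 := by
      rw [← coeff_phiQ Q f (psi Q u0), hker, coeff_zero]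
    set p : MvPolynomial Q K := ∑ u ∈ T, monomial u (coeff u f) with hp
    have hmono : ∀ d : Q →₀ ℕ, ∑ u ∈ T, (monomial d (coeff u f) : MvPolynomial Q K)
        = monomial d (∑ u ∈ T, coeff u f) := by
      intro d
      rw [← map_sum (MvPolynomial.monomial d)]
    have hpJ : p ∈ J := by
      have : ∑ u ∈ T, C (coeff u f) * ((monomial u 1 : MvPolynomial Q K) - monomial u0 1)
          = p := by
        simp_rw [mul_sub, C_mul_monomial, mul_one]
        rw [Finset.sum_sub_distrib, hmono, hS, monomial_zero, sub_zero, hp]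
      rw [← this]
      refine Ideal.sum_mem _ fun u hu => Ideal.mul_mem_left _ _ (hbin u u0 ?_)
      exact (Finset.mem_filter.mp hu).2
    have hpker : phiQ K Q p = 0 := by
      rw [hp, map_sum]
      have h2 : ∀ u ∈ T, phiQ K Q (monomial u (coeff u f))
          = monomial (psi Q u0) (coeff u f) := by
        intro u hu
        rw [phiQ_monomial, (Finset.mem_filter.mp hu).2]
      rw [Finset.sum_congr rfl h2, ← map_sum (MvPolynomial.monomial (psi Q u0)), hS,
        monomial_zero]
    have hcoeffp : ∀ u, coeff u p = if u ∈ T then coeff u f else 0 := by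
      intro u
      rw [hp, MvPolynomial.coeff_sum]
      simp_rw [coeff_monomial]
      exact Finset.sum_ite_eq' T u (fun x => coeff x f)
    have hgsupp : (f - p).support ⊆ f.support \ T := by
      intro u hu
      rw [MvPolynomial.mem_support_iff, MvPolynomial.coeff_sub, hcoeffp] at hu
      by_cases h : u ∈ T
      · simp [h] at hu
      · simp only [h, if_false, sub_zero] at hu
        exact Finset.mem_sdiff.mpr ⟨MvPolynomial.mem_support_iff.mpr hu, h⟩
    have hcard' : (f - p).support.card ≤ n := by
      have h1 : (f.support \ T).card = f.support.card - T.card :=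
        Finset.card_sdiff_of_subset (Finset.filter_subset _ _)
      have h2 : 1 ≤ T.card := Finset.card_pos.mpr ⟨u0, hu0T⟩
      have h3 := Finset.card_le_card hgsupp
      omega
    have hfp : f - p ∈ J := ih _ hcard' (by rw [map_sub, hker, hpker, sub_zero])
    have := J.add_mem hfp hpJ
    simpa using this

lemma psi_sum_eq (Q : Set (σ × τ)) (u : Q →₀ ℕ) :
    psi Q u = u.sum fun e m => m • w Q e := by rw [psi, Finsupp.liftAddHom_apply]; rfl

lemma psi_apply_inr (Q : Set (σ × τ)) (u : Q →₀ ℕ) (t : τ) :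
    psi Q u (inr t) = ∑ e ∈ u.support, (if e.1.2 = t then u e else 0) := by
  classical
  rw [psi_sum_eq, Finsupp.sum, Finsupp.finset_sum_apply]
  refine Finset.sum_congr rfl fun e _ => ?_
  simp only [Finsupp.smul_apply, w, Finsupp.add_apply, Finsupp.single_apply]
  split_ifs <;> simp_all

lemma psi_apply_inl (Q : Set (σ × τ)) (u : Q →₀ ℕ) (x : σ) :
    psi Q u (inl x) = ∑ e ∈ u.support, (if e.1.1 = x then u e else 0) := by
  classical
  rw [psi_sum_eq, Finsupp.sum, Finsupp.finset_sum_apply]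
  refine Finset.sum_congr rfl fun e _ => ?_
  simp only [Finsupp.smul_apply, w, Finsupp.add_apply, Finsupp.single_apply]
  split_ifs <;> simp_all

lemma psi_eq_zero_iff (Q : Set (σ × τ)) (u : Q →₀ ℕ) : psi Q u = 0 ↔ u = 0 := by
  classical
  constructor
  · intro h
    by_contra hu
    obtain ⟨e, he⟩ := Finsupp.support_nonempty_iff.mpr hu
    have h1 : u e ≤ psi Q u (inr e.1.2) := by
      rw [psi_apply_inr]
      have := Finset.single_le_sum
        (f := fun e' : Q => if e'.1.2 = e.1.2 then u e' else 0)
        (fun _ _ => Nat.zero_le _) he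
      simpa using this
    rw [h] at h1
    simp at h1
    exact Finsupp.mem_support_iff.mp he h1
  · rintro rfl; exact map_zero _

lemma claimV (Q : Set (σ × τ)) (u v : Q →₀ ℕ) (hpsi : psi Q u = psi Q v)
    (hdisj : ∀ e : Q, e ∈ u.support → e ∉ v.support) :
    ∀ e : Q, e ∈ u.support →
      ∃ e' : Q, e' ∈ v.support ∧ e'.1.2 = e.1.2 ∧ e'.1.1 ≠ e.1.1 := by
  classical
  intro e he
  have key : u e ≤ ∑ e' ∈ u.support, (if e'.1.2 = e.1.2 then u e' else 0) := by
    have h1 := Finset.single_le_sum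
      (f := fun e' : Q => if e'.1.2 = e.1.2 then u e' else 0)
      (fun _ _ => Nat.zero_le _) he
    simpa using h1
  have hsum : (∑ e' ∈ u.support, if e'.1.2 = e.1.2 then u e' else 0)
      = ∑ e' ∈ v.support, (if e'.1.2 = e.1.2 then v e' else 0) := by
    rw [← psi_apply_inr, ← psi_apply_inr, hpsi]
  have hne0 : (∑ e' ∈ v.support, (if e'.1.2 = e.1.2 then v e' else 0)) ≠ 0 := by
    have hue := Finsupp.mem_support_iff.mp he
    omega
  obtain ⟨e', he', hne⟩ := Finset.exists_ne_zero_of_sum_ne_zero hne0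
  by_cases hc : e'.1.2 = e.1.2
  · refine ⟨e', he', hc, fun h11 => ?_⟩
    have : e' = e := Subtype.ext (Prod.ext h11 hc)
    exact hdisj e he (this ▸ he')
  · rw [if_neg hc] at hne
    exact absurd rfl hne
lemma claimU (Q : Set (σ × τ)) (u v : Q →₀ ℕ) (hpsi : psi Q u = psi Q v)
    (hdisj : ∀ e : Q, e ∈ u.support → e ∉ v.support) :
    ∀ e : Q, e ∈ v.support →
      ∃ e' : Q, e' ∈ u.support ∧ e'.1.1 = e.1.1 ∧ e'.1.2 ≠ e.1.2 := by
  classical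
  intro e he
  have key : v e ≤ ∑ e' ∈ v.support, (if e'.1.1 = e.1.1 then v e' else 0) := by
    have h1 := Finset.single_le_sum
      (f := fun e' : Q => if e'.1.1 = e.1.1 then v e' else 0)
      (fun _ _ => Nat.zero_le _) he
    simpa using h1
  have hsum : (∑ e' ∈ v.support, if e'.1.1 = e.1.1 then v e' else 0)
      = ∑ e' ∈ u.support, (if e'.1.1 = e.1.1 then u e' else 0) := by
    rw [← psi_apply_inl, ← psi_apply_inl, hpsi]
  have hne0 : (∑ e' ∈ u.support, (if e'.1.1 = e.1.1 then u e' else 0)) ≠ 0 := by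
    have hue := Finsupp.mem_support_iff.mp he
    omega
  obtain ⟨e', he', hne⟩ := Finset.exists_ne_zero_of_sum_ne_zero hne0
  by_cases hc : e'.1.1 = e.1.1
  · refine ⟨e', he', hc, fun h22 => ?_⟩
    have : e' = e := Subtype.ext (Prod.ext hc h22)
    exact hdisj e' he' (this ▸ he)
  · rw [if_neg hc] at hne
    exact absurd rfl hne

lemma exists_cycle [Fintype σ] (Q : Set (σ × τ)) (u v : Q →₀ ℕ)
    (hpsi : psi Q u = psi Q v) (hdisj : ∀ e : Q, e ∈ u.support → e ∉ v.support)
    (hu : u ≠ 0) :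
    ∃ (n : ℕ) (j : Fin (n+2) → σ) (k : Fin (n+2) → τ) (eu ev : Fin (n+2) → Q),
      Function.Injective j ∧ Function.Injective k ∧
      (∀ i, (eu i).1 = (j i, k i) ∧ eu i ∈ u.support) ∧
      (∀ i, (ev i).1 = (j (i+1), k i) ∧ ev i ∈ v.support) := by
  classical
  choose stepV hV1 hV2 hV3 using claimV Q u v hpsi hdisj
  choose stepU hU1 hU2 hU3 using claimU Q u v hpsi hdisj
  obtain ⟨e0, he0⟩ := Finsupp.support_nonempty_iff.mpr hu
  set U := {e : Q // e ∈ u.support} with hU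
  set gnext : U → U := fun x => ⟨stepU (stepV x.1 x.2) (hV1 x.1 x.2), hU1 _ _⟩ with hgnext
  set g : ℕ → U := fun n => Nat.rec (⟨e0, he0⟩ : U) (fun _ x => gnext x) n with hg
  set js : ℕ → σ := fun n => ((g n).1 : Q).1.1 with hjs
  set ks : ℕ → τ := fun n => ((g n).1 : Q).1.2 with hks
  have hgsucc : ∀ n, g (n+1) = gnext (g n) := fun n => rfl
  have rel3 : ∀ n, js (n+1) = (stepV (g n).1 (g n).2).1.1 := by
    intro n
    show ((gnext (g n)).1 : Q).1.1 = _
    exact hU2 _ _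
  have P3 : ∀ n, js (n+1) ≠ js n := by
    intro n
    rw [rel3]
    exact hV3 _ _
  have P4 : ∀ n, ks (n+1) ≠ ks n := by
    intro n
    have h := hU3 (stepV (g n).1 (g n).2) (hV1 _ _)
    show ((gnext (g n)).1 : Q).1.2 ≠ _
    rw [hV2 (g n).1 (g n).2] at h
    exact h
  have P1 : ∀ n, ((g n).1 : Q).1 = (js n, ks n) ∧ (g n).1 ∈ u.support :=
    fun n => ⟨rfl, (g n).2⟩
  have P2 : ∀ n, ∃ e : Q, e.1 = (js (n+1), ks n) ∧ e ∈ v.support := by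
    intro n
    refine ⟨stepV (g n).1 (g n).2, ?_, hV1 _ _⟩
    have h1 := rel3 n
    have h2 := hV2 (g n).1 (g n).2
    exact Prod.ext h1.symm h2
  -- pigeonhole
  have hex : ∃ d, 0 < d ∧ ∃ p, js p = js (p + d) ∨ ks p = ks (p + d) := by
    obtain ⟨x, y, hne, heq⟩ := Finite.exists_ne_map_eq_of_infinite js
    rcases Nat.lt_or_ge x y with h | h
    · exact ⟨y - x, by omega, x, Or.inl (by rw [show x + (y-x) = y by omega]; exact heq)⟩
    · have h' : y < x := by omega
      exact ⟨x - y, by omega, y, Or.inl (by rw [show y + (x-y) = x by omega]; exact heq.symm)⟩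
  set d := Nat.find hex with hd
  obtain ⟨hdpos, p, hcol⟩ := Nat.find_spec hex
  have hmin : ∀ a b : ℕ, a < b → b - a < d → js a ≠ js b ∧ ks a ≠ ks b := by
    intro a b hab hbd
    constructor <;> intro h <;>
      exact Nat.find_min hex hbd ⟨by omega, a, by
        rw [show a + (b - a) = b by omega]; first | exact Or.inl h | exact Or.inr h⟩
  have hd2 : 2 ≤ d := by
    rcases Nat.lt_or_ge d 2 with h | h
    · have hd1 : Nat.find hex = 1 := by omega
      rw [hd1] at hcol
      rcases hcol with h' | h'
      · exact absurd h'.symm (P3 p)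
      · exact absurd h'.symm (P4 p)
    · exact h
  obtain ⟨n', hn'⟩ : ∃ n', d = n' + 2 := ⟨d - 2, by omega⟩
  rcases hcol with hJ | hK
  · -- j-collision : cycle on indices p, p+1, ..., p+d-1
    refine ⟨n', fun i => js (p + i.val), fun i => ks (p + i.val),
      fun i => (g (p + i.val)).1, fun i => Classical.choose (P2 (p + i.val)), ?_, ?_, ?_, ?_⟩
    · intro i i' h
      by_contra hne
      rcases Nat.lt_or_ge i.val i'.val with hlt | hge
      · exact ((hmin (p + i.val) (p + i'.val) (by omega) (by have := i'.isLt; omega)).1 h).elim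
      · have hlt : i'.val < i.val := by
          rcases Nat.lt_or_ge i'.val i.val with h' | h'
          · exact h'
          · exact absurd (Fin.ext (by omega)) hne
        exact ((hmin (p + i'.val) (p + i.val) (by omega) (by have := i.isLt; omega)).1 h.symm).elim
    · intro i i' h
      by_contra hne
      rcases Nat.lt_or_ge i.val i'.val with hlt | hge
      · exact ((hmin (p + i.val) (p + i'.val) (by omega) (by have := i'.isLt; omega)).2 h).elim
      · have hlt : i'.val < i.val := by
          rcases Nat.lt_or_ge i'.val i.val with h' | h'
          · exact h'
          · exact absurd (Fin.ext (by omega)) hne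
        exact ((hmin (p + i'.val) (p + i.val) (by omega) (by have := i.isLt; omega)).2 h.symm).elim
    · exact fun i => P1 (p + i.val)
    · intro i
      obtain ⟨hspec1, hspec2⟩ := Classical.choose_spec (P2 (p + i.val))
      refine ⟨?_, hspec2⟩
      rw [hspec1]
      by_cases hi : i = Fin.last (n'+1)
      · have e1 : i + 1 = 0 := by rw [hi]; exact Fin.last_add_one _
        have hv : i.val = n' + 1 := by rw [hi]; rfl
        rw [e1]
        show (js (p + i.val + 1), ks (p + i.val)) = (js (p + (0 : Fin (n'+2)).val), ks (p + i.val))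
        rw [Fin.val_zero, hv]
        rw [show p + (n' + 1) + 1 = p + d by omega, ← hJ]
        norm_num
      · have hv : (i + 1).val = i.val + 1 :=
          Fin.val_add_one_of_lt (Fin.lt_last_iff_ne_last.mpr hi)
        show (js (p + i.val + 1), ks (p + i.val)) = (js (p + (i+1).val), ks (p + i.val))
        rw [hv, show p + (i.val + 1) = p + i.val + 1 by omega]
  · -- k-collision : cycle on indices p+1, ..., p+d
    refine ⟨n', fun i => js (p + 1 + i.val), fun i => ks (p + 1 + i.val),
      fun i => (g (p + 1 + i.val)).1,
      fun i => if i = Fin.last (n'+1) then Classical.choose (P2 p)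
        else Classical.choose (P2 (p + 1 + i.val)), ?_, ?_, ?_, ?_⟩
    · intro i i' h
      by_contra hne
      rcases Nat.lt_or_ge i.val i'.val with hlt | hge
      · exact ((hmin (p + 1 + i.val) (p + 1 + i'.val) (by omega) (by have := i'.isLt; omega)).1 h).elim
      · have hlt : i'.val < i.val := by
          rcases Nat.lt_or_ge i'.val i.val with h' | h'
          · exact h'
          · exact absurd (Fin.ext (by omega)) hne
        exact ((hmin (p + 1 + i'.val) (p + 1 + i.val) (by omega) (by have := i.isLt; omega)).1 h.symm).elim
    · intro i i' h
      by_contra hne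
      rcases Nat.lt_or_ge i.val i'.val with hlt | hge
      · exact ((hmin (p + 1 + i.val) (p + 1 + i'.val) (by omega) (by have := i'.isLt; omega)).2 h).elim
      · have hlt : i'.val < i.val := by
          rcases Nat.lt_or_ge i'.val i.val with h' | h'
          · exact h'
          · exact absurd (Fin.ext (by omega)) hne
        exact ((hmin (p + 1 + i'.val) (p + 1 + i.val) (by omega) (by have := i.isLt; omega)).2 h.symm).elim
    · exact fun i => P1 (p + 1 + i.val)
    · intro i
      by_cases hi : i = Fin.last (n'+1)
      · simp only [if_pos hi]
        obtain ⟨hspec1, hspec2⟩ := Classical.choose_spec (P2 p)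
        refine ⟨?_, hspec2⟩
        rw [hspec1]
        have e1 : i + 1 = 0 := by rw [hi]; exact Fin.last_add_one _
        have hv : i.val = n' + 1 := by rw [hi]; rfl
        rw [e1]
        show (js (p + 1), ks p) = (js (p + 1 + (0 : Fin (n'+2)).val), ks (p + 1 + i.val))
        rw [Fin.val_zero, hv, show p + 1 + (n' + 1) = p + d by omega, ← hK]
      · simp only [if_neg hi]
        obtain ⟨hspec1, hspec2⟩ := Classical.choose_spec (P2 (p + 1 + i.val))
        refine ⟨?_, hspec2⟩
        rw [hspec1]
        have hv : (i + 1).val = i.val + 1 :=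
          Fin.val_add_one_of_lt (Fin.lt_last_iff_ne_last.mpr hi)
        show (js (p + 1 + i.val + 1), ks (p + 1 + i.val))
          = (js (p + 1 + (i+1).val), ks (p + 1 + i.val))
        rw [hv, show p + 1 + (i.val + 1) = p + 1 + i.val + 1 by omega]


lemma X_pair_eq {Q : Set (σ × τ)} {p q : σ × τ} (hp : p ∈ Q) (hq : q ∈ Q) (h : p = q) :
    (X ⟨p, hp⟩ : MvPolynomial Q K) = X ⟨q, hq⟩ := by subst h; rfl

noncomputable def cycBin (K : Type*) [Field K] {σ τ : Type*} (Q : Set (σ × τ)) {n : ℕ}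
    (j : Fin (n+2) → σ) (k : Fin (n+2) → τ)
    (h1 : ∀ i, (j i, k i) ∈ Q) (h2 : ∀ i, (j (i + 1), k i) ∈ Q) : MvPolynomial Q K :=
  (∏ i, X (⟨(j i, k i), h1 i⟩ : Q)) - ∏ i, X (⟨(j (i + 1), k i), h2 i⟩ : Q)

open Fin.NatCast Fin.CommRing in
lemma chordAtZero (Q : Set (σ × τ)) (n : ℕ) (j : Fin (n+2) → σ) (k : Fin (n+2) → τ)
    (hj : Function.Injective j) (hk : Function.Injective k)
    (h1 : ∀ i, (j i, k i) ∈ Q) (h2 : ∀ i, (j (i + 1), k i) ∈ Q)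
    (c : Fin (n+2)) (hc0 : c ≠ 0) (hc1 : c + 1 ≠ 0) (hQ : (j 0, k c) ∈ Q)
    (ih : ∀ m, m < n → ∀ (j' : Fin (m+2) → σ) (k' : Fin (m+2) → τ),
      Function.Injective j' → Function.Injective k' →
      ∀ (h1' : ∀ i, (j' i, k' i) ∈ Q) (h2' : ∀ i, (j' (i+1), k' i) ∈ Q),
        cycBin K Q j' k' h1' h2' ∈ Ideal.span (cycleBinomials K Q)) :
    cycBin K Q j k h1 h2 ∈ Ideal.span (cycleBinomials K Q) := by
  classical
  have hcval0 : c.val ≠ 0 := fun h => hc0 (Fin.ext (by simpa using h))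
  have hclast : c.val ≠ n + 1 := by
    intro h
    have hcl : c = Fin.last (n+1) := Fin.ext (by simpa using h)
    rw [hcl, Fin.last_add_one] at hc1
    exact hc1 rfl
  obtain ⟨nA, hnA⟩ : ∃ nA, c.val = nA + 1 := ⟨c.val - 1, by omega⟩
  have hcn2 := c.isLt
  obtain ⟨nB, hnB⟩ : ∃ nB, n = nA + 1 + nB := ⟨n - nA - 1, by omega⟩
  -- the three basic monomial families
  set F1 : ℕ → MvPolynomial Q K :=
    fun i => X ⟨(j ((i : ℕ) : Fin (n+2)), k ((i : ℕ) : Fin (n+2))), h1 _⟩ with hF1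
  set F2 : ℕ → MvPolynomial Q K :=
    fun i => X ⟨(j (((i : ℕ) : Fin (n+2)) + 1), k ((i : ℕ) : Fin (n+2))), h2 _⟩ with hF2
  set ch : MvPolynomial Q K := X ⟨(j 0, k c), hQ⟩ with hch
  -- subcycle A
  set jA : Fin (nA+2) → σ := fun i => j ((i.val : ℕ) : Fin (n+2)) with hjA
  set kA : Fin (nA+2) → τ := fun i => k ((i.val : ℕ) : Fin (n+2)) with hkA
  have castA : ∀ m : ℕ, m < nA + 2 → (((m : ℕ) : Fin (n+2))).val = m :=
    fun m hm => Fin.val_cast_of_lt (by omega)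
  have injA : Function.Injective jA := by
    intro i i' h
    have h2 := congrArg Fin.val (hj h)
    rw [castA _ i.isLt, castA _ i'.isLt] at h2
    exact Fin.ext h2
  have injkA : Function.Injective kA := by
    intro i i' h
    have h2 := congrArg Fin.val (hk h)
    rw [castA _ i.isLt, castA _ i'.isLt] at h2
    exact Fin.ext h2
  have hcastc : ((nA + 1 : ℕ) : Fin (n+2)) = c := Fin.ext (by rw [castA _ (by omega), hnA])
  have h1A : ∀ i, (jA i, kA i) ∈ Q := fun i => h1 _
  have h2A : ∀ i, (jA (i+1), kA i) ∈ Q := by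
    intro i
    by_cases hi : i = Fin.last (nA+1)
    · have e1 : i + 1 = 0 := by rw [hi]; exact Fin.last_add_one _
      have hv : i.val = nA + 1 := by rw [hi]; rfl
      show (j (((i+1).val : ℕ) : Fin (n+2)), k ((i.val : ℕ) : Fin (n+2))) ∈ Q
      rw [e1, hv, hcastc]
      show (j (((0 : Fin (nA+2)).val : ℕ) : Fin (n+2)), k c) ∈ Q
      norm_num
      exact hQ
    · have hv : (i + 1).val = i.val + 1 :=
        Fin.val_add_one_of_lt (Fin.lt_last_iff_ne_last.mpr hi)
      show (j (((i+1).val : ℕ) : Fin (n+2)), k ((i.val : ℕ) : Fin (n+2))) ∈ Q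
      rw [hv, Nat.cast_add, Nat.cast_one]
      exact h2 _
  have mA := ih nA (by omega) jA kA injA injkA h1A h2A
  -- subcycle B
  set jB : Fin (nB+2) → σ :=
    fun i => if i.val = 0 then j 0 else j ((nA + 1 + i.val : ℕ) : Fin (n+2)) with hjB
  set kB : Fin (nB+2) → τ := fun i => k ((nA + 1 + i.val : ℕ) : Fin (n+2)) with hkB
  have castB : ∀ m : ℕ, m ≤ nB + 1 → (((nA + 1 + m : ℕ) : Fin (n+2))).val = nA + 1 + m :=
    fun m hm => Fin.val_cast_of_lt (by omega)
  have injB : Function.Injective jB := by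
    intro i i' h
    simp only [hjB] at h
    split_ifs at h with p p' p'
    · exact Fin.ext (p.trans p'.symm)
    · have h2 := congrArg Fin.val (hj h)
      rw [Fin.val_zero, castB _ (by omega)] at h2
      omega
    · have h2 := congrArg Fin.val (hj h)
      rw [Fin.val_zero, castB _ (by omega)] at h2
      omega
    · have h2 := congrArg Fin.val (hj h)
      rw [castB _ (by omega), castB _ (by omega)] at h2
      exact Fin.ext (by omega)
  have injkB : Function.Injective kB := by
    intro i i' h
    have h2 := congrArg Fin.val (hk h)
    rw [castB _ (by omega), castB _ (by omega)] at h2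
    exact Fin.ext (by omega)
  have h1B : ∀ i, (jB i, kB i) ∈ Q := by
    intro i
    by_cases hi : i.val = 0
    · show (if i.val = 0 then j 0 else _, k ((nA + 1 + i.val : ℕ) : Fin (n+2))) ∈ Q
      rw [if_pos hi, hi]
      show (j 0, k ((nA + 1 + 0 : ℕ) : Fin (n+2))) ∈ Q
      norm_num [hcastc]
      exact hQ
    · show (if i.val = 0 then j 0 else j ((nA + 1 + i.val : ℕ) : Fin (n+2)),
        k ((nA + 1 + i.val : ℕ) : Fin (n+2))) ∈ Q
      rw [if_neg hi]
      exact h1 _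
  have hwrap : ((nA + 1 + (nB + 1) : ℕ) : Fin (n+2)) + 1 = 0 := by
    rw [← Nat.cast_one (R := Fin (n+2)), ← Nat.cast_add,
      show nA + 1 + (nB + 1) + 1 = n + 2 by omega, Fin.natCast_self]
  have h2B : ∀ i, (jB (i+1), kB i) ∈ Q := by
    intro i
    by_cases hi : i = Fin.last (nB+1)
    · have e1 : i + 1 = 0 := by rw [hi]; exact Fin.last_add_one _
      have hv : i.val = nB + 1 := by rw [hi]; rfl
      show (if (i+1).val = 0 then j 0 else _, k ((nA + 1 + i.val : ℕ) : Fin (n+2))) ∈ Q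
      rw [e1, hv, if_pos (Fin.val_zero _), ← hwrap]
      exact h2 _
    · have hv : (i + 1).val = i.val + 1 :=
        Fin.val_add_one_of_lt (Fin.lt_last_iff_ne_last.mpr hi)
      show (if (i+1).val = 0 then j 0 else j ((nA + 1 + (i+1).val : ℕ) : Fin (n+2)),
        k ((nA + 1 + i.val : ℕ) : Fin (n+2))) ∈ Q
      rw [hv, if_neg (by omega), show nA + 1 + (i.val + 1) = (nA + 1 + i.val) + 1 by omega,
        Nat.cast_add, Nat.cast_one]
      exact h2 _
  have mB := ih nB (by omega) jB kB injB injkB h1B h2B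
  -- product identities
  have eA1 : (∏ i, X (⟨(jA i, kA i), h1A i⟩ : Q) : MvPolynomial Q K)
      = ∏ i ∈ Finset.range (nA+2), F1 i := by
    rw [← Fin.prod_univ_eq_prod_range F1 (nA+2)]
  have eA2 : (∏ i, X (⟨(jA (i+1), kA i), h2A i⟩ : Q) : MvPolynomial Q K)
      = (∏ i ∈ Finset.range (nA+1), F2 i) * ch := by
    rw [Fin.prod_univ_castSucc]
    congr 1
    · rw [← Fin.prod_univ_eq_prod_range F2 (nA+1)]
      refine Finset.prod_congr rfl fun i _ => ?_
      have hv : (i.castSucc + 1).val = i.val + 1 :=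
        Fin.val_add_one_of_lt (Fin.lt_last_iff_ne_last.mpr (Fin.castSucc_lt_last i).ne)
      refine X_pair_eq _ _ ?_
      show (j (((i.castSucc+1).val : ℕ) : Fin (n+2)), k ((i.castSucc.val : ℕ) : Fin (n+2)))
        = (j ((((i : Fin (nA+1)).val : ℕ) : Fin (n+2)) + 1), k (((i : Fin (nA+1)).val : ℕ) : Fin (n+2)))
      rw [hv, Nat.cast_add, Nat.cast_one, Fin.coe_castSucc]
    · refine X_pair_eq _ _ ?_
      have e1 : (Fin.last (nA+1)) + 1 = 0 := Fin.last_add_one _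
      show (j (((Fin.last (nA+1) + 1).val : ℕ) : Fin (n+2)),
        k (((Fin.last (nA+1)).val : ℕ) : Fin (n+2))) = (j 0, k c)
      rw [e1, Fin.val_last, hcastc]
      norm_num
  have eB1 : (∏ i, X (⟨(jB i, kB i), h1B i⟩ : Q) : MvPolynomial Q K)
      = ch * ∏ i ∈ Finset.range (nB+1), F1 (nA+2+i) := by
    rw [Fin.prod_univ_succ]
    congr 1
    · refine X_pair_eq _ _ ?_
      show (if (0 : Fin (nB+2)).val = 0 then j 0 else _,
        k ((nA + 1 + (0 : Fin (nB+2)).val : ℕ) : Fin (n+2))) = (j 0, k c)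
      rw [if_pos (Fin.val_zero _), Fin.val_zero]
      norm_num [hcastc]
    · rw [← Fin.prod_univ_eq_prod_range (fun i => F1 (nA+2+i)) (nB+1)]
      refine Finset.prod_congr rfl fun i _ => ?_
      refine X_pair_eq _ _ ?_
      show (if (i.succ).val = 0 then j 0 else j ((nA + 1 + (i.succ).val : ℕ) : Fin (n+2)),
        k ((nA + 1 + (i.succ).val : ℕ) : Fin (n+2)))
        = (j ((nA+2+(i : Fin (nB+1)).val : ℕ) : Fin (n+2)), k ((nA+2+(i : Fin (nB+1)).val : ℕ) : Fin (n+2)))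
      rw [Fin.val_succ, if_neg (by omega), show nA + 1 + (i.val + 1) = nA+2+i.val by omega]
  have eB2 : (∏ i, X (⟨(jB (i+1), kB i), h2B i⟩ : Q) : MvPolynomial Q K)
      = ∏ i ∈ Finset.range (nB+2), F2 (nA+1+i) := by
    rw [← Fin.prod_univ_eq_prod_range (fun i => F2 (nA+1+i)) (nB+2)]
    refine Finset.prod_congr rfl fun i _ => ?_
    refine X_pair_eq _ _ ?_
    by_cases hi : i = Fin.last (nB+1)
    · have e1 : i + 1 = 0 := by rw [hi]; exact Fin.last_add_one _
      have hv : i.val = nB + 1 := by rw [hi]; rfl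
      show (if (i+1).val = 0 then j 0 else _, k ((nA + 1 + i.val : ℕ) : Fin (n+2)))
        = (j (((nA+1+i.val : ℕ) : Fin (n+2)) + 1), k ((nA+1+i.val : ℕ) : Fin (n+2)))
      rw [e1, if_pos (Fin.val_zero _), hv, hwrap]
    · have hv : (i + 1).val = i.val + 1 :=
        Fin.val_add_one_of_lt (Fin.lt_last_iff_ne_last.mpr hi)
      show (if (i+1).val = 0 then j 0 else j ((nA + 1 + (i+1).val : ℕ) : Fin (n+2)),
        k ((nA + 1 + i.val : ℕ) : Fin (n+2)))
        = (j (((nA+1+i.val : ℕ) : Fin (n+2)) + 1), k ((nA+1+i.val : ℕ) : Fin (n+2)))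
      rw [hv, if_neg (by omega), show nA + 1 + (i.val + 1) = (nA + 1 + i.val) + 1 by omega,
        Nat.cast_add, Nat.cast_one]
  have eP1 : (∏ i, X (⟨(j i, k i), h1 i⟩ : Q) : MvPolynomial Q K)
      = ∏ i ∈ Finset.range (n+2), F1 i := by
    rw [← Fin.prod_univ_eq_prod_range F1 (n+2)]
    refine Finset.prod_congr rfl fun i _ => ?_
    refine X_pair_eq _ _ ?_
    rw [Fin.cast_val_eq_self]
  have eP2 : (∏ i, X (⟨(j (i+1), k i), h2 i⟩ : Q) : MvPolynomial Q K)
      = ∏ i ∈ Finset.range (n+2), F2 i := by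
    rw [← Fin.prod_univ_eq_prod_range F2 (n+2)]
    refine Finset.prod_congr rfl fun i _ => ?_
    refine X_pair_eq _ _ ?_
    rw [Fin.cast_val_eq_self]
  have split1 : ∏ i ∈ Finset.range (n+2), F1 i
      = (∏ i ∈ Finset.range (nA+2), F1 i) * ∏ i ∈ Finset.range (nB+1), F1 (nA+2+i) := by
    rw [show n + 2 = (nA+2) + (nB+1) by omega, Finset.prod_range_add]
  have split2 : ∏ i ∈ Finset.range (n+2), F2 i
      = (∏ i ∈ Finset.range (nA+1), F2 i) * ∏ i ∈ Finset.range (nB+2), F2 (nA+1+i) := by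
    rw [show n + 2 = (nA+1) + (nB+2) by omega, Finset.prod_range_add]
  rw [cycBin, eP1, eP2, split1, split2]
  rw [cycBin, eA1, eA2] at mA
  rw [cycBin, eB1, eB2] at mB
  have key : (∏ i ∈ Finset.range (nA+2), F1 i) * (∏ i ∈ Finset.range (nB+1), F1 (nA+2+i))
      - (∏ i ∈ Finset.range (nA+1), F2 i) * (∏ i ∈ Finset.range (nB+2), F2 (nA+1+i))
      = (∏ i ∈ Finset.range (nB+1), F1 (nA+2+i)) *
          ((∏ i ∈ Finset.range (nA+2), F1 i) - (∏ i ∈ Finset.range (nA+1), F2 i) * ch)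
        + (∏ i ∈ Finset.range (nA+1), F2 i) *
          (ch * (∏ i ∈ Finset.range (nB+1), F1 (nA+2+i)) - ∏ i ∈ Finset.range (nB+2), F2 (nA+1+i)) := by
    ring
  rw [key]
  exact Ideal.add_mem _ (Ideal.mul_mem_left _ _ mA) (Ideal.mul_mem_left _ _ mB)


open Fin.CommRing in
lemma cycle_mem (Q : Set (σ × τ)) :
    ∀ (n : ℕ) (j : Fin (n+2) → σ) (k : Fin (n+2) → τ),
      Function.Injective j → Function.Injective k →
      ∀ (h1 : ∀ i, (j i, k i) ∈ Q) (h2 : ∀ i, (j (i+1), k i) ∈ Q),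
        cycBin K Q j k h1 h2 ∈ Ideal.span (cycleBinomials K Q) := by
  intro n
  induction n using Nat.strong_induction_on with
  | _ n ih =>
  intro j k hj hk h1 h2
  by_cases hind : ∀ a b, (j a, k b) ∈ Q → (b = a ∨ a = b + 1)
  · refine Ideal.subset_span ?_
    refine ⟨n, j, k, hj, hk, fun a b => ⟨hind a b, ?_⟩, h1, h2, rfl⟩
    rintro (rfl | rfl)
    exacts [h1 _, h2 _]
  · push_neg at hind
    obtain ⟨a, b, hab, hne1, hne2⟩ := hind
    set j' : Fin (n+2) → σ := fun i => j (i + a) with hj'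
    set k' : Fin (n+2) → τ := fun i => k (i + a) with hk'
    have hj'inj : Function.Injective j' := fun i i' h => by
      have := hj h
      exact add_right_cancel this
    have hk'inj : Function.Injective k' := fun i i' h => by
      have := hk h
      exact add_right_cancel this
    have h1' : ∀ i, (j' i, k' i) ∈ Q := fun i => h1 _
    have h2' : ∀ i, (j' (i+1), k' i) ∈ Q := by
      intro i
      show (j (i + 1 + a), k (i + a)) ∈ Q
      rw [add_right_comm]
      exact h2 _
    have hc0 : b - a ≠ 0 := sub_ne_zero.mpr hne1
    have hc1 : b - a + 1 ≠ 0 := by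
      intro h
      exact hne2 (by linear_combination -h)
    have hQ' : (j' 0, k' (b - a)) ∈ Q := by
      show (j (0 + a), k (b - a + a)) ∈ Q
      rw [zero_add, sub_add_cancel]
      exact hab
    have hmem := chordAtZero Q n j' k' hj'inj hk'inj h1' h2' (b - a) hc0 hc1 hQ' ih
    have eq1 : (∏ i, X (⟨(j i, k i), h1 i⟩ : Q) : MvPolynomial Q K)
        = ∏ i, X (⟨(j' i, k' i), h1' i⟩ : Q) :=
      (Fintype.prod_equiv (Equiv.addRight a) _ _ fun x => rfl).symm
    have eq2 : (∏ i, X (⟨(j (i+1), k i), h2 i⟩ : Q) : MvPolynomial Q K)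
        = ∏ i, X (⟨(j' (i+1), k' i), h2' i⟩ : Q) := by
      refine (Fintype.prod_equiv (Equiv.addRight a) _ _ fun x => ?_).symm
      refine X_pair_eq _ _ ?_
      show (j (x + 1 + a), k (x + a)) = (j (Equiv.addRight a x + 1), k (Equiv.addRight a x))
      rw [Equiv.coe_addRight, add_right_comm]
    rw [cycBin, eq1, eq2]
    exact hmem

noncomputable def deg (Q : Set (σ × τ)) : (Q →₀ ℕ) →+ ℕ :=
  Finsupp.liftAddHom fun _ => AddMonoidHom.id ℕ

lemma deg_single (Q : Set (σ × τ)) (e : Q) (m : ℕ) : deg Q (Finsupp.single e m) = m := by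
  rw [deg, Finsupp.liftAddHom_apply_single]; rfl

lemma apply_le_deg (Q : Set (σ × τ)) (u : Q →₀ ℕ) (e : Q) : u e ≤ deg Q u := by
  classical
  by_cases he : e ∈ u.support
  · rw [deg, Finsupp.liftAddHom_apply]
    exact Finset.single_le_sum (f := fun e' => u e') (fun _ _ => Nat.zero_le _) he
  · rw [Finsupp.notMem_support_iff.mp he]
    exact Nat.zero_le _

lemma deg_eq_zero {Q : Set (σ × τ)} {u : Q →₀ ℕ} (h : deg Q u = 0) : u = 0 := by
  ext e
  have := apply_le_deg Q u e
  simp only [Finsupp.coe_zero, Pi.zero_apply]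
  omega

lemma decompose {Q : Set (σ × τ)} (u c : Q →₀ ℕ) (h : ∀ e, c e ≤ u e) : (u - c) + c = u := by
  ext e
  rw [Finsupp.add_apply, Finsupp.tsub_apply]
  have := h e
  omega

lemma binomial_mem [Fintype σ] (Q : Set (σ × τ)) :
    ∀ (N : ℕ) (u v : Q →₀ ℕ), deg Q u ≤ N → psi Q u = psi Q v →
      (monomial u 1 : MvPolynomial Q K) - monomial v 1 ∈ Ideal.span (cycleBinomials K Q) := by
  intro N
  induction N with
  | zero =>
    intro u v hdeg hpsi
    have hu : u = 0 := deg_eq_zero (by omega)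
    have hv : v = 0 := (psi_eq_zero_iff Q v).mp (by rw [← hpsi, hu, map_zero])
    rw [hu, hv, sub_self]
    exact zero_mem _
  | succ N ih =>
    intro u v hdeg hpsi
    by_cases huv : u = v
    · rw [huv, sub_self]; exact zero_mem _
    by_cases hcom : ∃ e, e ∈ u.support ∧ e ∈ v.support
    · obtain ⟨e, heu, hev⟩ := hcom
      set u' := u - Finsupp.single e 1 with hu'
      set v' := v - Finsupp.single e 1 with hv'
      have hle : ∀ x : Q →₀ ℕ, e ∈ x.support → ∀ e', Finsupp.single e 1 e' ≤ x e' := by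
        intro x hx e'
        rw [Finsupp.single_apply]
        have := Finsupp.mem_support_iff.mp hx
        split_ifs with h
        · subst h; omega
        · omega
      have hu'add : u' + Finsupp.single e 1 = u := decompose u _ (hle u heu)
      have hv'add : v' + Finsupp.single e 1 = v := decompose v _ (hle v hev)
      have hpsi' : psi Q u' = psi Q v' := by
        have h1 : psi Q u' + psi Q (Finsupp.single e 1)
            = psi Q v' + psi Q (Finsupp.single e 1) := by
          rw [← map_add, ← map_add, hu'add, hv'add, hpsi]
        ext x
        have h2 := congrArg (fun f : (σ ⊕ τ) →₀ ℕ => f x) h1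
        simp only [Finsupp.add_apply] at h2
        omega
      have hdeg' : deg Q u' ≤ N := by
        have h3 : deg Q u' + deg Q (Finsupp.single e 1) = deg Q u := by
          rw [← map_add, hu'add]
        rw [deg_single] at h3
        omega
      have hbin := ih u' v' hdeg' hpsi'
      have key : (monomial u 1 : MvPolynomial Q K) - monomial v 1
          = monomial (Finsupp.single e 1) 1 * (monomial u' 1 - monomial v' 1) := by
        rw [mul_sub, monomial_mul, monomial_mul, mul_one,
          show Finsupp.single e 1 + u' = u from by rw [add_comm]; exact hu'add,
          show Finsupp.single e 1 + v' = v from by rw [add_comm]; exact hv'add]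
      rw [key]
      exact Ideal.mul_mem_left _ _ hbin
    · push_neg at hcom
      have hune : u ≠ 0 := by
        intro h0
        apply huv
        have : v = 0 := (psi_eq_zero_iff Q v).mp (by rw [← hpsi, h0, map_zero])
        rw [h0, this]
      obtain ⟨n, j, k, eu, ev, hjinj, hkinj, heu, hev⟩ := exists_cycle Q u v hpsi hcom hune
      have h1 : ∀ i, (j i, k i) ∈ Q := fun i => (heu i).1 ▸ (eu i).2
      have h2 : ∀ i, (j (i+1), k i) ∈ Q := fun i => (hev i).1 ▸ (ev i).2
      have heue : ∀ i, eu i = ⟨(j i, k i), h1 i⟩ := fun i => Subtype.ext (heu i).1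
      have heve : ∀ i, ev i = ⟨(j (i+1), k i), h2 i⟩ := fun i => Subtype.ext (hev i).1
      have heuinj : Function.Injective eu := by
        intro i i' h
        apply hjinj
        have ha := (heu i).1
        have hb := (heu i').1
        rw [h, hb] at ha
        exact (congrArg Prod.fst ha).symm
      have hevinj : Function.Injective ev := by
        intro i i' h
        apply hkinj
        have ha := (hev i).1
        have hb := (hev i').1
        rw [h, hb] at ha
        exact (congrArg Prod.snd ha).symm
      set c1 : Q →₀ ℕ := ∑ i, Finsupp.single (eu i) 1 with hc1
      set c2 : Q →₀ ℕ := ∑ i, Finsupp.single (ev i) 1 with hc2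
      have capp : ∀ (f : Fin (n+2) → Q), Function.Injective f →
          ∀ e : Q, (∑ i, Finsupp.single (f i) 1) e = if ∃ i, f i = e then 1 else 0 := by
        intro f hf e
        rw [Finsupp.finset_sum_apply]
        by_cases he : ∃ i, f i = e
        · obtain ⟨i0, rfl⟩ := he
          rw [if_pos ⟨i0, rfl⟩]
          rw [Finset.sum_eq_single i0]
          · rw [Finsupp.single_apply, if_pos rfl]
          · intro i _ hne
            rw [Finsupp.single_apply, if_neg (fun hh => hne (hf hh))]
          · intro h; exact absurd (Finset.mem_univ i0) h
        · rw [if_neg he]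
          refine Finset.sum_eq_zero fun i _ => ?_
          rw [Finsupp.single_apply, if_neg (fun hh => he ⟨i, hh⟩)]
      have hc1le : ∀ e, c1 e ≤ u e := by
        intro e
        rw [hc1, capp eu heuinj]
        split_ifs with he
        · obtain ⟨i0, rfl⟩ := he
          have := Finsupp.mem_support_iff.mp (heu i0).2
          omega
        · exact Nat.zero_le _
      have hc2le : ∀ e, c2 e ≤ v e := by
        intro e
        rw [hc2, capp ev hevinj]
        split_ifs with he
        · obtain ⟨i0, rfl⟩ := he
          have := Finsupp.mem_support_iff.mp (hev i0).2
          omega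
        · exact Nat.zero_le _
      set u'' := u - c1 with hu''
      set v'' := v - c2 with hv''
      have hu''add : u'' + c1 = u := decompose u c1 hc1le
      have hv''add : v'' + c2 = v := decompose v c2 hc2le
      have hpsic : psi Q c1 = psi Q c2 := by
        rw [hc1, hc2, map_sum, map_sum]
        have hterm1 : ∀ i, psi Q (Finsupp.single (eu i) 1)
            = Finsupp.single (inl (j i)) 1 + Finsupp.single (inr (k i)) 1 := by
          intro i
          rw [psi_single, one_smul, heue i]; rfl
        have hterm2 : ∀ i, psi Q (Finsupp.single (ev i) 1)
            = Finsupp.single (inl (j (i+1))) 1 + Finsupp.single (inr (k i)) 1 := by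
          intro i
          rw [psi_single, one_smul, heve i]; rfl
        rw [Finset.sum_congr rfl fun i _ => hterm1 i, Finset.sum_congr rfl fun i _ => hterm2 i,
          Finset.sum_add_distrib, Finset.sum_add_distrib]
        congr 1
        exact (Fintype.sum_equiv (Equiv.addRight (1 : Fin (n+2))) _ _ fun i => rfl).symm
      have hpsi'' : psi Q u'' = psi Q v'' := by
        have hh1 : psi Q u'' + psi Q c1 = psi Q v'' + psi Q c1 := by
          rw [← map_add, hu''add, hpsi, ← hv''add, map_add, hpsic]
        ext x
        have h2' := congrArg (fun f : (σ ⊕ τ) →₀ ℕ => f x) hh1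
        simp only [Finsupp.add_apply] at h2'
        omega
      have hdegc1 : deg Q c1 = n + 2 := by
        rw [hc1, map_sum]
        simp [deg_single]
      have hdeg'' : deg Q u'' ≤ N := by
        have h3 : deg Q u'' + deg Q c1 = deg Q u := by rw [← map_add, hu''add]
        omega
      have hbin'' := ih u'' v'' hdeg'' hpsi''
      have hcyc := cycle_mem (K := K) Q n j k hjinj hkinj h1 h2
      have hX : ∀ (f : Fin (n+2) → Q),
          (monomial (∑ i, Finsupp.single (f i) 1) 1 : MvPolynomial Q K) = ∏ i, X (f i) := by
        intro f
        rw [monomial_sum_one]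
        rfl
      have hc1X : (monomial c1 1 : MvPolynomial Q K) = ∏ i, X (⟨(j i, k i), h1 i⟩ : Q) := by
        rw [hc1, hX eu]
        exact Finset.prod_congr rfl fun i _ => by rw [heue i]
      have hc2X : (monomial c2 1 : MvPolynomial Q K)
          = ∏ i, X (⟨(j (i+1), k i), h2 i⟩ : Q) := by
        rw [hc2, hX ev]
        exact Finset.prod_congr rfl fun i _ => by rw [heve i]
      have hcycbin : (monomial c1 1 : MvPolynomial Q K) - monomial c2 1
          ∈ Ideal.span (cycleBinomials K Q) := by
        rw [hc1X, hc2X]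
        exact hcyc
      have key : (monomial u 1 : MvPolynomial Q K) - monomial v 1
          = monomial u'' 1 * (monomial c1 1 - monomial c2 1)
            + monomial c2 1 * (monomial u'' 1 - monomial v'' 1) := by
        rw [mul_sub, mul_sub, monomial_mul, monomial_mul, monomial_mul, monomial_mul, mul_one,
          hu''add, show c2 + v'' = v from by rw [add_comm]; exact hv''add,
          show u'' + c2 = c2 + u'' from add_comm _ _]
        ring
      rw [key]
      exact Ideal.add_mem _ (Ideal.mul_mem_left _ _ hcycbin) (Ideal.mul_mem_left _ _ hbin'')

end Stmt1Aux

/-- the quasi-independence ideal `I_Q = ker φ_Q` is generated by the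
binomials of the induced cycles of `G_Q`. -/
theorem stmt1 (K : Type*) [Field K] (r s : ℕ) (Q : Set (Fin r × Fin s)) :
    RingHom.ker (phiQ K Q) = Ideal.span (cycleBinomials K Q) := by
  apply le_antisymm
  · intro f hf
    exact Stmt1Aux.ker_le_of_binomials Q _
      (fun u v h => Stmt1Aux.binomial_mem Q (Stmt1Aux.deg Q u) u v le_rfl h) f
      (RingHom.mem_ker.mp hf)
  · rw [Ideal.span_le]
    rintro f ⟨n, j, k, hj, hk, hiff, h1, h2, rfl⟩
    rw [SetLike.mem_coe, RingHom.mem_ker, map_sub]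
    have key : ∀ (jj : Fin (n+2) → Fin r) (kk : Fin (n+2) → Fin s)
        (h : ∀ i, (jj i, kk i) ∈ Q),
        phiQ K Q (∏ i, X (⟨(jj i, kk i), h i⟩ : Q))
          = (∏ i, X (Sum.inl (jj i))) * ∏ i, X (Sum.inr (kk i)) := by
      intro jj kk h
      rw [map_prod]
      rw [show (fun i => phiQ K Q (X (⟨(jj i, kk i), h i⟩ : Q)))
          = fun i => (X (Sum.inl (jj i)) * X (Sum.inr (kk i)) : MvPolynomial (Fin r ⊕ Fin s) K)
        from funext fun i => by rw [phiQ, aeval_X]]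
      rw [Finset.prod_mul_distrib]
    rw [key j k h1, key (fun i => j (i+1)) k h2]
    have hrot : (∏ i, (X (Sum.inl (j (i+1))) : MvPolynomial (Fin r ⊕ Fin s) K))
        = ∏ i, X (Sum.inl (j i)) :=
      Fintype.prod_equiv (Equiv.addRight (1 : Fin (n+2))) _ _ fun i => rfl
    rw [hrot, sub_self]
end

section
/- Let φ : K[z_1, …, z_n] → K[t_1, …, t_d] be a monomial map (each z_i is sent to a monomial in the t-variables) with matrix of exponent vectors B ∈ Z_{≥0}^{d × n}. If I is an ideal in K[t_1, …, t_d] and ω ∈ Z_{≥0}^d is a weight vector, then init_{ω^T B}(φ^{-1}(I)) ⊆ φ^{-1}(init_ω(I)). -/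
open MvPolynomial

/-- The monomial map `K[z_1, …, z_n] → K[t_1, …, t_d]` with matrix of exponent
vectors `B` (the `i`-th column `B i` is the exponent vector of the image of `z_i`). -/
noncomputable def monomialMap (K : Type*) [Field K] {n d : ℕ}
    (B : Fin n → (Fin d →₀ ℕ)) :
    MvPolynomial (Fin n) K →ₐ[K] MvPolynomial (Fin d) K :=
  aeval fun i => monomial (B i) (1 : K)

/-- The `ω`-weight of an exponent vector. -/
noncomputable def wt {σ : Type*} (ω : σ → ℝ) (u : σ →₀ ℕ) : ℝ :=
  u.sum fun i e => ω i * e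

open scoped Classical in
/-- The initial form `init_ω(f)`: the sum of the terms of `f` of maximal `ω`-weight. -/
noncomputable def initForm {σ K : Type*} [Field K] (ω : σ → ℝ) (f : MvPolynomial σ K) :
    MvPolynomial σ K :=
  ∑ u ∈ f.support.filter (fun u => ∀ v ∈ f.support, wt ω v ≤ wt ω u),
    monomial u (f.coeff u)

/-- The initial ideal `init_ω(I)`: the ideal generated by the initial forms of the
nonzero elements of `I`. -/
noncomputable def initIdeal {σ K : Type*} [Field K] (ω : σ → ℝ)
    (I : Ideal (MvPolynomial σ K)) : Ideal (MvPolynomial σ K) :=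
  Ideal.span { g | ∃ f ∈ I, f ≠ 0 ∧ g = initForm ω f }

/- ### Auxiliary material -/

/-- The exponent-vector map induced by the matrix `B`. -/
noncomputable def PhiB {n d : ℕ} (B : Fin n → (Fin d →₀ ℕ)) (u : Fin n →₀ ℕ) :
    Fin d →₀ ℕ :=
  ∑ i : Fin n, u i • B i

lemma wt_eq_sum_univ {σ : Type*} [Fintype σ] (ω : σ → ℝ) (u : σ →₀ ℕ) :
    wt ω u = ∑ i : σ, ω i * u i := by
  rw [wt, Finsupp.sum_fintype]
  intro i; simp

lemma prod_monomial_one {K : Type*} [Field K] {d : ℕ} {ι : Type*} (s : Finset ι)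
    (g : ι → (Fin d →₀ ℕ)) :
    (∏ i ∈ s, monomial (g i) (1 : K)) = monomial (∑ i ∈ s, g i) (1 : K) := by
  classical
  induction s using Finset.induction_on with
  | empty => simp [monomial_zero']
  | @insert a s hi ih => simp [Finset.prod_insert hi, Finset.sum_insert hi, ih, monomial_mul]

lemma monomialMap_monomial {K : Type*} [Field K] {n d : ℕ} (B : Fin n → (Fin d →₀ ℕ))
    (u : Fin n →₀ ℕ) (c : K) :
    monomialMap K B (monomial u c) = monomial (PhiB B u) c := by
  classical
  rw [monomialMap, aeval_monomial, Finsupp.prod_fintype _ _ (fun i => pow_zero _)]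
  simp_rw [monomial_pow, one_pow]
  rw [prod_monomial_one, PhiB, algebraMap_eq, C_mul_monomial, mul_one]

lemma wt_PhiB {n d : ℕ} (B : Fin n → (Fin d →₀ ℕ)) (ω : Fin d → ℝ) (u : Fin n →₀ ℕ) :
    wt ω (PhiB B u) = wt (fun i : Fin n => ∑ x : Fin d, ω x * (B i x : ℝ)) u := by
  rw [wt_eq_sum_univ, wt_eq_sum_univ, PhiB]
  simp only [Finsupp.finset_sum_apply, Finsupp.smul_apply, smul_eq_mul]
  push_cast
  simp_rw [Finset.mul_sum, Finset.sum_mul]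
  rw [Finset.sum_comm]
  exact Finset.sum_congr rfl fun i _ => Finset.sum_congr rfl fun x _ => by ring

open scoped Classical in
lemma coeff_monomialMap {K : Type*} [Field K] {n d : ℕ} (B : Fin n → (Fin d →₀ ℕ))
    (f : MvPolynomial (Fin n) K) (m : Fin d →₀ ℕ) :
    coeff m (monomialMap K B f)
      = ∑ u ∈ f.support.filter (fun u => PhiB B u = m), coeff u f := by
  conv_lhs => rw [f.as_sum, map_sum]
  simp_rw [monomialMap_monomial, coeff_sum, coeff_monomial]
  rw [Finset.sum_filter]

open scoped Classical in
lemma coeff_sum_monomial {K : Type*} [Field K] {σ : Type*} (s : Finset (σ →₀ ℕ))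
    (c : (σ →₀ ℕ) → K) (m : σ →₀ ℕ) :
    coeff m (∑ u ∈ s, monomial u (c u)) = if m ∈ s then c m else 0 := by
  rw [coeff_sum]
  simp_rw [coeff_monomial]
  exact Finset.sum_ite_eq' s m c

open scoped Classical in
lemma coeff_initForm {σ K : Type*} [Field K] (ω : σ → ℝ) (f : MvPolynomial σ K)
    (m : σ →₀ ℕ) :
    coeff m (initForm ω f)
      = if m ∈ f.support ∧ ∀ v ∈ f.support, wt ω v ≤ wt ω m then coeff m f else 0 := by
  rw [initForm, coeff_sum_monomial]
  simp [Finset.mem_filter]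

/-- for a monomial map `φ` with exponent matrix `B`, an ideal
`I ⊆ K[t_1, …, t_d]` and a nonnegative integral weight vector `ω ∈ ℤ_{≥0}^d`, one has
`init_{ωᵀB}(φ⁻¹(I)) ⊆ φ⁻¹(init_ω(I))`. -/
theorem stmt4 (K : Type*) [Field K] (n d : ℕ) (B : Fin n → (Fin d →₀ ℕ))
    (I : Ideal (MvPolynomial (Fin d) K)) (ω : Fin d → ℕ) :
    initIdeal (fun i : Fin n => ∑ x : Fin d, (ω x : ℝ) * (B i x : ℝ))
        (Ideal.comap (monomialMap K B) I) ≤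
      Ideal.comap (monomialMap K B)
        (initIdeal (fun x : Fin d => (ω x : ℝ)) I) := by
  classical
  set ωr : Fin d → ℝ := fun x => (ω x : ℝ) with hωr
  set ω' : Fin n → ℝ := fun i => ∑ x : Fin d, ωr x * (B i x : ℝ) with hω'
  have hwt : ∀ u : Fin n →₀ ℕ, wt ωr (PhiB B u) = wt ω' u := fun u => wt_PhiB B ωr u
  rw [initIdeal, Ideal.span_le]
  rintro g ⟨f, hfI, hf0, rfl⟩
  rw [Ideal.mem_comap] at hfI
  obtain ⟨u0, hu0s, hu0max⟩ :=
    Finset.exists_max_image f.support (wt ω') (support_nonempty.2 hf0)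
  set W : ℝ := wt ω' u0 with hW
  -- key coefficient formula for the image of the initial form
  have key : ∀ m : Fin d →₀ ℕ,
      coeff m (monomialMap K B (initForm ω' f))
        = if wt ωr m = W then coeff m (monomialMap K B f) else 0 := by
    intro m
    rw [initForm, map_sum]
    simp_rw [monomialMap_monomial, coeff_sum, coeff_monomial]
    rw [← Finset.sum_filter, Finset.filter_filter, coeff_monomialMap]
    by_cases h : wt ωr m = W
    · rw [if_pos h]
      congr 1
      apply Finset.filter_congr
      intro u hu
      simp only [and_iff_right_iff_imp]
      intro hq v hv
      have : wt ω' u = W := by rw [← hwt, hq, h]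
      rw [this]
      exact hu0max v hv
    · rw [if_neg h]
      rw [Finset.filter_eq_empty_iff.2, Finset.sum_empty]
      rintro u hu ⟨hP, hQ⟩
      apply h
      rw [← hQ, hwt]
      exact le_antisymm (hu0max u hu) (hP u0 hu0s)
  by_cases hz : monomialMap K B (initForm ω' f) = 0
  · rw [SetLike.mem_coe, Ideal.mem_comap, hz]
    exact Ideal.zero_mem _
  · obtain ⟨m0, hm0⟩ := ne_zero_iff.1 hz
    have hm0W : wt ωr m0 = W := by
      by_contra h
      rw [key, if_neg h] at hm0
      exact hm0 rfl
    have hm0f : coeff m0 (monomialMap K B f) ≠ 0 := by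
      rw [key, if_pos hm0W] at hm0
      exact hm0
    have hφf : monomialMap K B f ≠ 0 := fun h => hm0f (by rw [h, coeff_zero])
    have hbound : ∀ v ∈ (monomialMap K B f).support, wt ωr v ≤ W := by
      intro v hv
      rw [mem_support_iff, coeff_monomialMap] at hv
      obtain ⟨u, hu, -⟩ := Finset.exists_ne_zero_of_sum_ne_zero hv
      rw [Finset.mem_filter] at hu
      rw [← hu.2, hwt]
      exact hu0max u hu.1
    have heq : monomialMap K B (initForm ω' f) = initForm ωr (monomialMap K B f) := by
      apply MvPolynomial.ext
      intro m
      rw [key, coeff_initForm]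
      by_cases h : wt ωr m = W
      · rw [if_pos h]
        by_cases hm : m ∈ (monomialMap K B f).support
        · rw [if_pos ⟨hm, fun v hv => (hbound v hv).trans h.ge⟩]
        · rw [if_neg (fun hc => hm hc.1), notMem_support_iff.1 hm]
      · rw [if_neg h, if_neg]
        rintro ⟨hm, hmax⟩
        have hm0supp : m0 ∈ (monomialMap K B f).support := mem_support_iff.2 hm0f
        exact h (le_antisymm (hbound m hm) (hm0W ▸ hmax m0 hm0supp))
    rw [SetLike.mem_coe, Ideal.mem_comap, heq]
    exact Ideal.subset_span ⟨monomialMap K B f, hfI, hφf, rfl⟩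
end

section
/- Let K be a field, Q ⊆ [r] × [s], and let m = x_{j_1} x_{j_2} ⋯ x_{j_d} be a monomial in K[x_j, y_k | j ∈ [r], k ∈ [s]] involving only x-variables. Then φ_Q^{-1}(⟨m⟩) = ⟨z_{j_1 k_1} z_{j_2 k_2} ⋯ z_{j_d k_d} | k_1, …, k_d ∈ [s] with (j_ℓ, k_ℓ) ∈ Q for 1 ≤ ℓ ≤ d⟩ + I_Q. Symmetrically, for a monomial n = y_{k_1} ⋯ y_{k_d} involving only y-variables, φ_Q^{-1}(⟨n⟩) = ⟨z_{j_1 k_1} ⋯ z_{j_d k_d} | j_1, …, j_d ∈ [r] with (j_ℓ, k_ℓ) ∈ Q⟩ + I_Q. -/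
open MvPolynomial

section Aux

variable {K : Type*} [Field K] {V Qt : Type*}

/-- The exponent of the image of a `z`-monomial. -/
noncomputable def embA (a b : Qt → V) (u : Qt →₀ ℕ) : V →₀ ℕ :=
  u.sum fun q n => Finsupp.single (a q) n + Finsupp.single (b q) n

lemma embA_add (a b : Qt → V) (u v : Qt →₀ ℕ) :
    embA a b (u + v) = embA a b u + embA a b v := by
  classical
  exact Finsupp.sum_add_index (by simp) (by
    intro q _ m n
    simp [Finsupp.single_add]
    abel)

lemma embA_single (a b : Qt → V) (q : Qt) (n : ℕ) :
    embA a b (Finsupp.single q n) = Finsupp.single (a q) n + Finsupp.single (b q) n := by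
  classical
  exact Finsupp.sum_single_index (by simp)

lemma aeval_monomial_embA (a b : Qt → V) (u : Qt →₀ ℕ) (c : K) :
    aeval (fun q => (X (a q) * X (b q) : MvPolynomial V K)) (monomial u c)
      = monomial (embA a b u) c := by
  classical
  rw [aeval_monomial, embA, monomial_finsupp_sum_index]
  congr 1
  refine Finsupp.prod_congr fun q _ => ?_
  rw [mul_pow, X_pow_eq_monomial, X_pow_eq_monomial, monomial_mul, one_mul]

/-- Combinatorial key lemma: if the image exponent of `u` dominates the exponent of
`∏ X (w ℓ)`, then `u` dominates a product of `z`-variables lifting `w`. -/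
lemma comb (a b : Qt → V) {d : ℕ} (w : Fin d → V) (hbw : ∀ q ℓ, b q ≠ w ℓ)
    (u : Qt →₀ ℕ) (hle : (∑ ℓ, Finsupp.single (w ℓ) 1) ≤ embA a b u) :
    ∃ qq : Fin d → Qt, (∀ ℓ, a (qq ℓ) = w ℓ) ∧
      (∑ ℓ, Finsupp.single (qq ℓ) 1) ≤ u := by
  classical
  induction d generalizing u with
  | zero => exact ⟨Fin.elim0, fun ℓ => ℓ.elim0, by simp⟩
  | succ d ih =>
    have hsum : (∑ ℓ, Finsupp.single (w ℓ) (1:ℕ))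
        = (∑ ℓ : Fin d, Finsupp.single (w ℓ.castSucc) 1) + Finsupp.single (w (Fin.last d)) 1 := by
      rw [Fin.sum_univ_castSucc]
    -- find q with a q = w (last) and u q > 0
    have hpos : 0 < embA a b u (w (Fin.last d)) := by
      have := hle (w (Fin.last d))
      have h1 : (1:ℕ) ≤ (∑ ℓ, Finsupp.single (w ℓ) 1) (w (Fin.last d)) := by
        rw [hsum]
        simp [Finsupp.add_apply]
      omega
    obtain ⟨q, hq, hqpos⟩ : ∃ q ∈ u.support,
        0 < (Finsupp.single (a q) (u q) + Finsupp.single (b q) (u q))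
          (w (Fin.last d)) := by
      by_contra hcon
      push_neg at hcon
      have : embA a b u (w (Fin.last d)) = 0 := by
        rw [embA, Finsupp.sum_apply]
        exact Finset.sum_eq_zero fun q hq => Nat.le_zero.mp (hcon q hq)
      omega
    have haq : a q = w (Fin.last d) := by
      by_contra hne
      rw [Finsupp.add_apply, Finsupp.single_apply, Finsupp.single_apply,
        if_neg hne, if_neg (hbw q (Fin.last d))] at hqpos
      omega
    have huq : 1 ≤ u q := by
      by_contra h
      push_neg at h
      interval_cases h' : u q <;> simp_all
    set u' : Qt →₀ ℕ := u - Finsupp.single q 1 with hu'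
    have hrec : u' + Finsupp.single q 1 = u := by
      ext v
      simp only [Finsupp.add_apply, hu', Finsupp.tsub_apply]
      rcases eq_or_ne v q with rfl | hne
      · simp; omega
      · simp [Finsupp.single_apply, Ne.symm hne]
    have hembu : embA a b u = embA a b u' + (Finsupp.single (a q) 1 + Finsupp.single (b q) 1) := by
      conv_lhs => rw [← hrec]
      rw [embA_add, embA_single]
    have hle' : (∑ ℓ : Fin d, Finsupp.single (w ℓ.castSucc) (1:ℕ)) ≤ embA a b u' := by
      intro v
      have h1 := hle v
      rw [hembu, hsum] at h1
      simp only [Finsupp.add_apply] at h1 ⊢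
      rcases eq_or_ne v (b q) with rfl | hnb
      · have : (∑ ℓ : Fin d, Finsupp.single (w ℓ.castSucc) (1:ℕ)) (b q) = 0 := by
          rw [Finsupp.finset_sum_apply]
          exact Finset.sum_eq_zero fun ℓ _ => Finsupp.single_eq_of_ne' (Ne.symm (hbw q ℓ.castSucc))
        omega
      · have hb0 : Finsupp.single (b q) (1:ℕ) v = 0 := Finsupp.single_eq_of_ne' (Ne.symm hnb)
        have haw : Finsupp.single (a q) (1:ℕ) v = Finsupp.single (w (Fin.last d)) (1:ℕ) v := by
          rw [haq]
        omega
    obtain ⟨qq', hqq'a, hqq'le⟩ := ih (fun ℓ => w ℓ.castSucc) (fun q ℓ => hbw q ℓ.castSucc) u' hle'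
    refine ⟨Fin.snoc qq' q, ?_, ?_⟩
    · intro ℓ
      refine Fin.lastCases ?_ (fun i => ?_) ℓ
      · simp [haq]
      · simp [hqq'a i]
    · rw [Fin.sum_univ_castSucc]
      simp only [Fin.snoc_castSucc, Fin.snoc_last]
      calc (∑ i : Fin d, Finsupp.single (qq' i) 1) + Finsupp.single q 1
          ≤ u' + Finsupp.single q 1 := add_le_add hqq'le le_rfl
        _ = u := hrec

lemma prod_X_eq_monomial {d : ℕ} (w : Fin d → V) :
    (∏ ℓ, X (w ℓ) : MvPolynomial V K) = monomial (∑ ℓ, Finsupp.single (w ℓ) 1) 1 := by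
  classical
  induction d with
  | zero => simp
  | succ d ih =>
    rw [Fin.prod_univ_castSucc, Fin.sum_univ_castSucc, ih, X, monomial_mul, mul_one]

/-- The main lemma in a symmetric formulation. -/
lemma main_lemma (K : Type*) [Field K] {V Qt : Type*} (a b : Qt → V)
    {d : ℕ} (w : Fin d → V) (hbw' : ∀ q ℓ, b q ≠ w ℓ) :
    Ideal.comap (aeval (fun q => (X (a q) * X (b q) : MvPolynomial V K)) :
        MvPolynomial Qt K →ₐ[K] MvPolynomial V K)
        (Ideal.span {(∏ ℓ, X (w ℓ) : MvPolynomial V K)}) =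
      Ideal.span { g : MvPolynomial Qt K |
          ∃ qq : Fin d → Qt, (∀ ℓ, a (qq ℓ) = w ℓ) ∧ g = ∏ ℓ, X (qq ℓ) } +
        RingHom.ker (aeval (fun q => (X (a q) * X (b q) : MvPolynomial V K)) :
          MvPolynomial Qt K →ₐ[K] MvPolynomial V K) := by
  classical
  set φ := (aeval (fun q => (X (a q) * X (b q) : MvPolynomial V K)) :
      MvPolynomial Qt K →ₐ[K] MvPolynomial V K) with hφ
  set α : V →₀ ℕ := ∑ ℓ, Finsupp.single (w ℓ) 1 with hα
  set S := { g : MvPolynomial Qt K |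
      ∃ qq : Fin d → Qt, (∀ ℓ, a (qq ℓ) = w ℓ) ∧ g = ∏ ℓ, X (qq ℓ) } with hS
  have hφmon : ∀ (u : Qt →₀ ℕ) (c : K), φ (monomial u c) = monomial (embA a b u) c :=
    fun u c => aeval_monomial_embA a b u c
  have hspan : Ideal.span {(∏ ℓ, X (w ℓ) : MvPolynomial V K)}
      = Ideal.span ((fun e => monomial e (1:K)) '' {α}) := by
    rw [Set.image_singleton, prod_X_eq_monomial]
  apply le_antisymm
  · -- hard direction
    intro f hf
    rw [Ideal.mem_comap, hspan, mem_ideal_span_monomial_image] at hf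
    simp only [Set.mem_singleton_iff, exists_eq_left] at hf
    set f1 := ∑ u ∈ f.support.filter (fun u => α ≤ embA a b u), monomial u (coeff u f) with hf1d
    set f2 := ∑ u ∈ f.support.filter (fun u => ¬ α ≤ embA a b u),
        monomial u (coeff u f) with hf2d
    have hsplit : f = f1 + f2 := by
      rw [hf1d, hf2d, Finset.sum_filter_add_sum_filter_not, support_sum_monomial_coeff]
    have hf1mem : f1 ∈ Ideal.span S := by
      refine Ideal.sum_mem _ fun u hu => ?_
      rw [Finset.mem_filter] at hu
      obtain ⟨qq, hqqa, hqqle⟩ := comb a b w hbw' u hu.2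
      have hg : (∏ ℓ, X (qq ℓ) : MvPolynomial Qt K) ∈ S := ⟨qq, hqqa, rfl⟩
      have heq : monomial u (coeff u f)
          = monomial (u - ∑ ℓ, Finsupp.single (qq ℓ) 1) (coeff u f) * ∏ ℓ, X (qq ℓ) := by
        rw [prod_X_eq_monomial, monomial_mul, mul_one, tsub_add_cancel_of_le hqqle]
      rw [heq]
      exact Ideal.mul_mem_left _ _ (Ideal.subset_span hg)
    have hf1img : φ f1 ∈ Ideal.span ((fun e => monomial e (1:K)) '' {α}) := by
      rw [mem_ideal_span_monomial_image]
      simp only [Set.mem_singleton_iff, exists_eq_left]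
      intro e he
      rw [hf1d, map_sum] at he
      simp only [hφmon] at he
      obtain ⟨u, hu, heu⟩ := Finset.mem_biUnion.mp (support_sum he)
      rw [Finset.mem_filter] at hu
      have := support_monomial_subset heu
      rw [Finset.mem_singleton] at this
      exact this ▸ hu.2
    have hfimg : φ f ∈ Ideal.span ((fun e => monomial e (1:K)) '' {α}) := by
      rw [mem_ideal_span_monomial_image]
      simp only [Set.mem_singleton_iff, exists_eq_left]
      exact hf
    have hf2img : φ f2 ∈ Ideal.span ((fun e => monomial e (1:K)) '' {α}) := by
      have : φ f2 = φ f - φ f1 := by rw [hsplit, map_add]; ring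
      rw [this]
      exact sub_mem hfimg hf1img
    have hf2ker : f2 ∈ RingHom.ker φ := by
      rw [RingHom.mem_ker]
      rw [mem_ideal_span_monomial_image] at hf2img
      simp only [Set.mem_singleton_iff, exists_eq_left] at hf2img
      rw [← support_eq_empty, Finset.eq_empty_iff_forall_notMem]
      intro e he
      have hαe := hf2img e he
      rw [hf2d, map_sum] at he
      simp only [hφmon] at he
      obtain ⟨u, hu, heu⟩ := Finset.mem_biUnion.mp (support_sum he)
      rw [Finset.mem_filter] at hu
      have := support_monomial_subset heu
      rw [Finset.mem_singleton] at this
      exact hu.2 (this ▸ hαe)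
    rw [hsplit, Submodule.add_eq_sup]
    exact add_mem (Ideal.mem_sup_left hf1mem) (Ideal.mem_sup_right hf2ker)
  · rw [Submodule.add_eq_sup, sup_le_iff]
    constructor
    · rw [Ideal.span_le]
      rintro g ⟨qq, hqq, rfl⟩
      have : φ (∏ ℓ, X (qq ℓ)) = (∏ ℓ, X (w ℓ)) * ∏ ℓ, (X (b (qq ℓ)) : MvPolynomial V K) := by
        rw [map_prod]
        simp only [hφ, aeval_X]
        rw [← Finset.prod_mul_distrib]
        exact Finset.prod_congr rfl fun ℓ _ => by rw [hqq ℓ]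
      show (∏ ℓ, X (qq ℓ) : MvPolynomial Qt K) ∈ Ideal.comap φ _
      rw [Ideal.mem_comap, this]
      exact Ideal.mul_mem_right _ _ (Ideal.subset_span rfl)
    · intro f hfker
      rw [RingHom.mem_ker] at hfker
      show f ∈ Ideal.comap φ _
      rw [Ideal.mem_comap, hfker]
      exact Ideal.zero_mem _

end Aux

/-- for a monomial `m = x_{j_1} ⋯ x_{j_d}` in the `x`-variables,
`φ_Q⁻¹(⟨m⟩) = ⟨ z_{j_1 k_1} ⋯ z_{j_d k_d} | k ∈ [s]^d, (j_ℓ, k_ℓ) ∈ Q ⟩ + I_Q`, and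
symmetrically for a monomial `n = y_{k_1} ⋯ y_{k_d}` in the `y`-variables. -/
theorem stmt7 (K : Type*) [Field K] (r s : ℕ) (Q : Set (Fin r × Fin s))
    (d : ℕ) (j : Fin d → Fin r) (k : Fin d → Fin s) :
    (Ideal.comap (phiQ K Q)
        (Ideal.span {(∏ ℓ, X (Sum.inl (j ℓ)) : MvPolynomial (Fin r ⊕ Fin s) K)}) =
      Ideal.span { g : MvPolynomial Q K |
          ∃ (kk : Fin d → Fin s) (h : ∀ ℓ, (j ℓ, kk ℓ) ∈ Q),
            g = ∏ ℓ, X (⟨(j ℓ, kk ℓ), h ℓ⟩ : Q) } +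
        RingHom.ker (phiQ K Q)) ∧
    (Ideal.comap (phiQ K Q)
        (Ideal.span {(∏ ℓ, X (Sum.inr (k ℓ)) : MvPolynomial (Fin r ⊕ Fin s) K)}) =
      Ideal.span { g : MvPolynomial Q K |
          ∃ (jj : Fin d → Fin r) (h : ∀ ℓ, (jj ℓ, k ℓ) ∈ Q),
            g = ∏ ℓ, X (⟨(jj ℓ, k ℓ), h ℓ⟩ : Q) } +
        RingHom.ker (phiQ K Q)) := by
  constructor
  · have hφ : phiQ K Q = (aeval (fun q => (X (Sum.inl q.1.1) * X (Sum.inr q.1.2) :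
        MvPolynomial (Fin r ⊕ Fin s) K)) : MvPolynomial Q K →ₐ[K] _) := rfl
    have hmain := main_lemma K (Qt := Q) (fun q => Sum.inl q.1.1) (fun q => Sum.inr q.1.2)
      (fun ℓ => Sum.inl (j ℓ)) (fun q ℓ => by simp)
    rw [hφ, hmain]
    congr 2
    ext g
    constructor
    · rintro ⟨qq, hqq, rfl⟩
      refine ⟨fun ℓ => (qq ℓ).1.2, fun ℓ => ?_, ?_⟩
      · have h1 : (qq ℓ).1.1 = j ℓ := Sum.inl.inj (hqq ℓ)
        have := (qq ℓ).2
        rwa [← h1]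
      · refine Finset.prod_congr rfl fun ℓ _ => ?_
        congr 1
        exact Subtype.ext (Prod.ext (Sum.inl.inj (hqq ℓ)) rfl)
    · rintro ⟨kk, h, rfl⟩
      exact ⟨fun ℓ => ⟨(j ℓ, kk ℓ), h ℓ⟩, fun ℓ => rfl, rfl⟩
  · have hφ : phiQ K Q = (aeval (fun q => (X (Sum.inr q.1.2) * X (Sum.inl q.1.1) :
        MvPolynomial (Fin r ⊕ Fin s) K)) : MvPolynomial Q K →ₐ[K] _) := by
      apply MvPolynomial.algHom_ext
      intro q
      simp [phiQ, mul_comm]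
    have hmain := main_lemma K (Qt := Q) (fun q => Sum.inr q.1.2) (fun q => Sum.inl q.1.1)
      (fun ℓ => Sum.inr (k ℓ)) (fun q ℓ => by simp)
    rw [hφ, hmain]
    congr 2
    ext g
    constructor
    · rintro ⟨qq, hqq, rfl⟩
      refine ⟨fun ℓ => (qq ℓ).1.1, fun ℓ => ?_, ?_⟩
      · have h1 : (qq ℓ).1.2 = k ℓ := Sum.inr.inj (hqq ℓ)
        have := (qq ℓ).2
        rwa [← h1]
      · refine Finset.prod_congr rfl fun ℓ _ => ?_
        congr 1
        exact Subtype.ext (Prod.ext rfl (Sum.inr.inj (hqq ℓ)))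
    · rintro ⟨jj, h, rfl⟩
      exact ⟨fun ℓ => ⟨(jj ℓ, k ℓ), h ℓ⟩, fun ℓ => rfl, rfl⟩
end

section
/- Let A ∈ Z^{d × r} and A' ∈ Z^{d' × s} be integer matrices with columns a_1, …, a_r and a'_1, …, a'_s, and let I_A = ker(ψ_A) and I_{A'} = ker(ψ_{A'}) be the associated toric ideals, where ψ_A : K[x_j | j ∈ [r]] → K[t^{±}] sends x_j ↦ t^{a_j} and ψ_{A'} : K[y_k | k ∈ [s]] → K[t^{±}] sends y_k ↦ t^{a'_k}. Then for any Q ⊆ [r] × [s], the quasi-independence gluing I_A ×_Q I_{A'} = φ_Q^{-1}(I_A + I_{A'}) equals the toric ideal of the matrix A ×_Q A' whose columns are the vectors (a_j, a'_k)^T for (j,k) ∈ Q; that is, I_A ×_Q I_{A'} = ker(ψ) where ψ : K[z_{jk} | (j,k) ∈ Q] → K[t^{±}] sends z_{jk} ↦ t^{a_j} t^{a'_k} (the t-variables of ψ_A and ψ_{A'} taken in disjoint blocks). -/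
open MvPolynomial

/-- The quasi-independence gluing `I ×_Q J := φ_Q⁻¹(I + J)`. -/
noncomputable def QIG (K : Type*) [Field K] {σ τ : Type*} (Q : Set (σ × τ))
    (I : Ideal (MvPolynomial σ K)) (J : Ideal (MvPolynomial τ K)) :
    Ideal (MvPolynomial Q K) :=
  Ideal.comap (phiQ K Q)
    (Ideal.map (rename (Sum.inl : σ → σ ⊕ τ)) I +
      Ideal.map (rename (Sum.inr : τ → σ ⊕ τ)) J)

/-- The monomial map into the Laurent polynomial ring (the group algebra of `ℤ^d`)
associated to an integer matrix with columns `A j ∈ ℤ^d`: `x_j ↦ t^{A j}`. -/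
noncomputable def laurentMap (K : Type*) [Field K] {σ : Type*} {d : ℕ}
    (A : σ → (Fin d →₀ ℤ)) :
    MvPolynomial σ K →ₐ[K] AddMonoidAlgebra K (Fin d →₀ ℤ) :=
  aeval fun j => AddMonoidAlgebra.single (A j) 1

/-- The monomial map of the glued matrix `A ×_Q A'`, whose column at `(j,k) ∈ Q` is
`(a_j, a'_k)ᵀ` (the `t`-variables of the two factors taken in disjoint blocks):
`z_{jk} ↦ t^{a_j} t'^{a'_k}`. -/
noncomputable def gluedLaurentMap (K : Type*) [Field K] {σ τ : Type*} {d d' : ℕ}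
    (A : σ → (Fin d →₀ ℤ)) (A' : τ → (Fin d' →₀ ℤ)) (Q : Set (σ × τ)) :
    MvPolynomial Q K →ₐ[K] AddMonoidAlgebra K ((Fin d →₀ ℤ) × (Fin d' →₀ ℤ)) :=
  aeval fun q => AddMonoidAlgebra.single (A q.1.1, A' q.1.2) 1

/- ### Auxiliary machinery ### -/

open MvPolynomial TensorProduct

set_option synthInstance.maxHeartbeats 400000
set_option maxHeartbeats 1000000

noncomputable section

variable {K : Type*} [Field K] {M M' : Type*} [AddCommMonoid M] [AddCommMonoid M']

def inlA (K M M' : Type*) [Field K] [AddCommMonoid M] [AddCommMonoid M'] :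
    AddMonoidAlgebra K M →ₐ[K] AddMonoidAlgebra K (M × M') :=
  AddMonoidAlgebra.mapDomainAlgHom K K (AddMonoidHom.inl M M')

def inrA (K M M' : Type*) [Field K] [AddCommMonoid M] [AddCommMonoid M'] :
    AddMonoidAlgebra K M' →ₐ[K] AddMonoidAlgebra K (M × M') :=
  AddMonoidAlgebra.mapDomainAlgHom K K (AddMonoidHom.inr M M')

@[simp] lemma inlA_single (a : M) (r : K) :
    inlA K M M' (AddMonoidAlgebra.single a r) = AddMonoidAlgebra.single (a, 0) r := by
  simp [inlA, AddMonoidAlgebra.mapDomainAlgHom]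

@[simp] lemma inrA_single (b : M') (r : K) :
    inrA K M M' (AddMonoidAlgebra.single b r) = AddMonoidAlgebra.single ((0 : M), b) r := by
  simp [inrA, AddMonoidAlgebra.mapDomainAlgHom]

def muA (K M M' : Type*) [Field K] [AddCommMonoid M] [AddCommMonoid M'] :
    AddMonoidAlgebra K M ⊗[K] AddMonoidAlgebra K M' →ₐ[K] AddMonoidAlgebra K (M × M') :=
  Algebra.TensorProduct.productMap (inlA K M M') (inrA K M M')

def nuMul (K M M' : Type*) [Field K] [AddCommMonoid M] [AddCommMonoid M'] :
    Multiplicative (M × M') →* (AddMonoidAlgebra K M ⊗[K] AddMonoidAlgebra K M') where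
  toFun p := AddMonoidAlgebra.single p.toAdd.1 (1 : K) ⊗ₜ[K]
    AddMonoidAlgebra.single p.toAdd.2 (1 : K)
  map_one' := by
    rw [Algebra.TensorProduct.one_def]
    rfl
  map_mul' p q := by
    rw [Algebra.TensorProduct.tmul_mul_tmul, AddMonoidAlgebra.single_mul_single,
      AddMonoidAlgebra.single_mul_single, mul_one]
    rfl

def nuA (K M M' : Type*) [Field K] [AddCommMonoid M] [AddCommMonoid M'] :
    AddMonoidAlgebra K (M × M') →ₐ[K] AddMonoidAlgebra K M ⊗[K] AddMonoidAlgebra K M' :=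
  AddMonoidAlgebra.lift K _ (M × M') (nuMul K M M')

lemma muA_injective : Function.Injective (muA K M M') := by
  have h : ∀ x : AddMonoidAlgebra K M ⊗[K] AddMonoidAlgebra K M',
      nuA K M M' (muA K M M' x) = x := by
    intro x
    induction x using TensorProduct.induction_on with
    | zero => rw [map_zero, map_zero]
    | add a b ha hb => rw [map_add, map_add, ha, hb]
    | tmul p q =>
      induction p using AddMonoidAlgebra.induction_linear with
      | zero => rw [TensorProduct.zero_tmul, map_zero, map_zero]
      | add u v hu hv => rw [TensorProduct.add_tmul, map_add, map_add, hu, hv]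
      | single a r =>
        induction q using AddMonoidAlgebra.induction_linear with
        | zero => rw [TensorProduct.tmul_zero, map_zero, map_zero]
        | add u v hu hv => rw [TensorProduct.tmul_add, map_add, map_add, hu, hv]
        | single b s =>
          rw [muA, Algebra.TensorProduct.productMap_apply_tmul, inlA_single, inrA_single,
            AddMonoidAlgebra.single_mul_single]
          rw [nuA, AddMonoidAlgebra.lift_single]
          rw [show ((a, (0 : M')) + ((0 : M), b)) = (a, b) by simp]
          rw [show (nuMul K M M') (Multiplicative.ofAdd ((a, b) : M × M')) =
            AddMonoidAlgebra.single a (1 : K) ⊗ₜ[K] AddMonoidAlgebra.single b (1 : K) from rfl]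
          rw [mul_smul, ← TensorProduct.tmul_smul, TensorProduct.smul_tmul']
          congr 1
          · exact (AddMonoidAlgebra.smul_single' r a 1).trans (by rw [mul_one])
          · exact (AddMonoidAlgebra.smul_single' s b 1).trans (by rw [mul_one])
  intro x y hxy
  have := h x
  rw [hxy, h y] at this
  exact this.symm

lemma tensor_map_ker {A B C D : Type*} [CommRing A] [CommRing B] [CommRing C] [CommRing D]
    [Algebra K A] [Algebra K B] [Algebra K C] [Algebra K D]
    (f : A →ₐ[K] B) (g : C →ₐ[K] D) :
    RingHom.ker (Algebra.TensorProduct.map f g) =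
      Ideal.map (Algebra.TensorProduct.includeLeft (S := K)) (RingHom.ker f) ⊔
        Ideal.map (Algebra.TensorProduct.includeRight) (RingHom.ker g) := by
  have hTfact : ∀ x, (Algebra.TensorProduct.map f g) x =
      (Algebra.TensorProduct.map f.range.val g.range.val)
        ((Algebra.TensorProduct.map f.rangeRestrict g.rangeRestrict) x) := by
    intro x
    induction x using TensorProduct.induction_on with
    | zero => rw [map_zero, map_zero, map_zero]
    | add a b ha hb => rw [map_add, map_add, map_add, ha, hb]
    | tmul p q =>
      rw [Algebra.TensorProduct.map_tmul, Algebra.TensorProduct.map_tmul,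
        Algebra.TensorProduct.map_tmul]
      rfl
  have hvalinj : Function.Injective
      (Algebra.TensorProduct.map f.range.val g.range.val) := by
    have hcoe : ∀ x, (Algebra.TensorProduct.map f.range.val g.range.val) x =
        TensorProduct.map f.range.val.toLinearMap g.range.val.toLinearMap x := by
      intro x
      induction x using TensorProduct.induction_on with
      | zero => rw [map_zero, map_zero]
      | add a b ha hb => rw [map_add, map_add, ha, hb]
      | tmul p q =>
        rw [Algebra.TensorProduct.map_tmul, TensorProduct.map_tmul]
        rfl
    have hinj : Function.Injective
        (TensorProduct.map f.range.val.toLinearMap g.range.val.toLinearMap) := by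
      rw [← LinearMap.lTensor_comp_rTensor]
      exact (Module.Flat.lTensor_preserves_injective_linearMap _ Subtype.val_injective).comp
        (Module.Flat.rTensor_preserves_injective_linearMap _ Subtype.val_injective)
    intro x y hxy
    exact hinj (by rw [← hcoe, ← hcoe, hxy])
  have heq : RingHom.ker (Algebra.TensorProduct.map f g) = RingHom.ker
      (Algebra.TensorProduct.map f.rangeRestrict g.rangeRestrict) := by
    ext x
    simp only [RingHom.mem_ker]
    rw [hTfact]
    constructor
    · intro h
      apply hvalinj
      rw [h, map_zero]
    · intro h; rw [h, map_zero]
  rw [heq, Algebra.TensorProduct.map_ker _ _ f.rangeRestrict_surjective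
    g.rangeRestrict_surjective, AlgHom.ker_rangeRestrict, AlgHom.ker_rangeRestrict]

lemma ideal_map_comp_alg {R S T : Type*} [CommRing R] [CommRing S] [CommRing T]
    [Algebra K R] [Algebra K S] [Algebra K T]
    (u : R →ₐ[K] S) (v : S →ₐ[K] T) (I : Ideal R) :
    Ideal.map v (Ideal.map u I) = Ideal.map (v.comp u) I := by
  have h0 : Ideal.map v (Ideal.map u I) =
      Ideal.map (v : S →+* T) (Ideal.map (u : R →+* S) I) := rfl
  rw [h0, Ideal.map_map]
  rfl

lemma ker_glue {σ τ : Type*} (f : MvPolynomial σ K →ₐ[K] AddMonoidAlgebra K M)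
    (g : MvPolynomial τ K →ₐ[K] AddMonoidAlgebra K M')
    (Ψ : MvPolynomial (σ ⊕ τ) K →ₐ[K] AddMonoidAlgebra K (M × M'))
    (hl : ∀ j, Ψ (X (Sum.inl j)) = inlA K M M' (f (X j)))
    (hr : ∀ k, Ψ (X (Sum.inr k)) = inrA K M M' (g (X k))) :
    RingHom.ker Ψ =
      Ideal.map (rename (Sum.inl : σ → σ ⊕ τ)) (RingHom.ker f) ⊔
        Ideal.map (rename (Sum.inr : τ → σ ⊕ τ)) (RingHom.ker g) := by
  set G : MvPolynomial σ K ⊗[K] MvPolynomial τ K →ₐ[K] MvPolynomial (σ ⊕ τ) K :=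
    Algebra.TensorProduct.productMap (rename Sum.inl) (rename Sum.inr) with hG
  have hGsurj : Function.Surjective G := by
    set F : MvPolynomial (σ ⊕ τ) K →ₐ[K] MvPolynomial σ K ⊗[K] MvPolynomial τ K :=
      aeval (Sum.elim (fun j => (X j : MvPolynomial σ K) ⊗ₜ[K] 1)
        (fun k => (1 : MvPolynomial σ K) ⊗ₜ[K] X k)) with hF
    have hid : G.comp F = AlgHom.id K _ := by
      apply MvPolynomial.algHom_ext
      rintro (j | k) <;>
        simp [hF, hG, Algebra.TensorProduct.productMap_left_apply,
          Algebra.TensorProduct.productMap_right_apply]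
    intro x
    exact ⟨F x, by rw [← AlgHom.comp_apply, hid]; rfl⟩
  set T : MvPolynomial σ K ⊗[K] MvPolynomial τ K →ₐ[K]
      AddMonoidAlgebra K M ⊗[K] AddMonoidAlgebra K M' := Algebra.TensorProduct.map f g with hT
  have hleft : Ψ.comp (rename Sum.inl) = (inlA K M M').comp f := by
    apply MvPolynomial.algHom_ext
    intro j
    simp only [AlgHom.comp_apply, rename_X]
    exact hl j
  have hright : Ψ.comp (rename Sum.inr) = (inrA K M M').comp g := by
    apply MvPolynomial.algHom_ext
    intro k
    simp only [AlgHom.comp_apply, rename_X]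
    exact hr k
  have hcomm : ∀ x, Ψ (G x) = muA K M M' (T x) := by
    intro x
    induction x using TensorProduct.induction_on with
    | zero => rw [map_zero, map_zero, map_zero, map_zero]
    | add a b ha hb => rw [map_add, map_add, map_add, map_add, ha, hb]
    | tmul p q =>
      rw [hG, Algebra.TensorProduct.productMap_apply_tmul, map_mul, hT,
        Algebra.TensorProduct.map_tmul, muA, Algebra.TensorProduct.productMap_apply_tmul,
        ← AlgHom.comp_apply, ← AlgHom.comp_apply, hleft, hright]
      rfl
  have hkerT : RingHom.ker T =
      Ideal.map (Algebra.TensorProduct.includeLeft (S := K)) (RingHom.ker f) ⊔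
        Ideal.map (Algebra.TensorProduct.includeRight) (RingHom.ker g) := by
    rw [hT]; exact tensor_map_ker f g
  have h1 : Ideal.comap G (RingHom.ker Ψ) = RingHom.ker T := by
    ext x
    simp only [Ideal.mem_comap, RingHom.mem_ker, hcomm]
    constructor
    · intro h
      apply muA_injective
      rw [h, map_zero]
    · intro h; rw [h, map_zero]
  calc RingHom.ker Ψ = Ideal.map G (Ideal.comap G (RingHom.ker Ψ)) :=
        (Ideal.map_comap_of_surjective _ hGsurj _).symm
    _ = Ideal.map G (RingHom.ker T) := by rw [h1]
    _ = _ := by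
        rw [hkerT, Ideal.map_sup, ideal_map_comp_alg, ideal_map_comp_alg]
        rw [show G.comp (Algebra.TensorProduct.includeLeft (S := K)) = rename Sum.inl from
          Algebra.TensorProduct.productMap_left _ _]
        rw [show G.comp (Algebra.TensorProduct.includeRight) = rename Sum.inr from
          Algebra.TensorProduct.productMap_right _ _]
end

/-- the quasi-independence gluing of the toric ideals `I_A = ker ψ_A`
and `I_{A'} = ker ψ_{A'}` is the toric ideal of the matrix `A ×_Q A'` whose columns
are the vectors `(a_j, a'_k)ᵀ` for `(j,k) ∈ Q`. -/
theorem stmt10 (K : Type*) [Field K] (r s d d' : ℕ)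
    (A : Fin r → (Fin d →₀ ℤ)) (A' : Fin s → (Fin d' →₀ ℤ))
    (Q : Set (Fin r × Fin s)) :
    QIG K Q (RingHom.ker (laurentMap K A)) (RingHom.ker (laurentMap K A')) =
      RingHom.ker (gluedLaurentMap K A A' Q) := by
  set Ψ : MvPolynomial (Fin r ⊕ Fin s) K →ₐ[K]
      AddMonoidAlgebra K ((Fin d →₀ ℤ) × (Fin d' →₀ ℤ)) :=
    aeval (Sum.elim (fun j => AddMonoidAlgebra.single ((A j, 0) : _ × _) (1 : K))
      (fun k => AddMonoidAlgebra.single (((0 : Fin d →₀ ℤ), A' k)) (1 : K))) with hΨ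
  have hcompat : ∀ x, gluedLaurentMap K A A' Q x = Ψ (phiQ K Q x) := by
    have hc : Ψ.comp (phiQ K Q) = gluedLaurentMap K A A' Q := by
      apply MvPolynomial.algHom_ext
      intro q
      simp only [AlgHom.comp_apply, phiQ, gluedLaurentMap, aeval_X, map_mul, hΨ, Sum.elim_inl,
        Sum.elim_inr, AddMonoidAlgebra.single_mul_single, Prod.mk_add_mk, add_zero, zero_add,
        mul_one]
    intro x
    rw [← hc]
    rfl
  have hker : RingHom.ker (gluedLaurentMap K A A' Q) =
      Ideal.comap (phiQ K Q) (RingHom.ker Ψ) := by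
    ext x
    simp only [RingHom.mem_ker, Ideal.mem_comap, hcompat]
  rw [hker, QIG, Submodule.add_eq_sup]
  congr 1
  refine (ker_glue (laurentMap K A) (laurentMap K A') Ψ ?_ ?_).symm
  · intro j
    simp [hΨ, laurentMap]
  · intro k
    simp [hΨ, laurentMap]
end

section
/- Let G = ([p], E) be the star graph, i.e., E = {j − i* : j ∈ [p] \ {i*}} for some i* ∈ [p], with p ≥ 2. Then the characteristic imset ideal I_G is the zero ideal; equivalently, the monomial map ψ_G is injective, i.e., the characteristic imsets of the distinct Markov equivalence classes of DAGs with skeleton G are affinely independent 0/1-vectors. -/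
open MvPolynomial

/-- A directed acyclic graph on the vertex set `Fin p`: `edge i j` means `i → j`. -/
structure DAG (p : ℕ) where
  edge : Fin p → Fin p → Prop
  acyclic : ∀ i, ¬ Relation.TransGen edge i i

/-- The skeleton of a DAG: its underlying undirected graph. -/
def DAG.skeleton {p : ℕ} (D : DAG p) : SimpleGraph (Fin p) where
  Adj i j := D.edge i j ∨ D.edge j i
  symm := ⟨fun _ _ h => h.symm⟩
  loopless := ⟨fun i h => D.acyclic i (Relation.TransGen.single (h.elim id id))⟩

/-- The characteristic imset of a DAG, as a predicate on subsets `S ⊆ [p]`: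
`c_𝒢(S) = 1` iff `|S| ≥ 2` and there is an `i ∈ S` with `S \ {i} ⊆ pa_𝒢(i)`. -/
def DAG.cim {p : ℕ} (D : DAG p) (S : Finset (Fin p)) : Prop :=
  2 ≤ S.card ∧ ∃ i ∈ S, ∀ j ∈ S, j ≠ i → D.edge j i

/-- The set of characteristic imsets of DAGs with skeleton `G`.  Since two DAGs are
Markov equivalent iff their characteristic imsets coincide, this set is in bijection
with the set of Markov equivalence classes of DAGs with skeleton `G`. -/
def imsets (p : ℕ) (G : SimpleGraph (Fin p)) : Set (Finset (Fin p) → Prop) :=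
  { c | ∃ D : DAG p, D.skeleton = G ∧ c = D.cim }

open scoped Classical in
/-- The monomial map `ψ_G` of the characteristic imset ideal: the variable of a Markov
equivalence class with characteristic imset `c` is sent to `∏_{S : c(S) = 1} t_S`. -/
noncomputable def psiG (K : Type*) [Field K] (p : ℕ) (G : SimpleGraph (Fin p)) :
    MvPolynomial (imsets p G) K →ₐ[K] MvPolynomial (Finset (Fin p)) K :=
  aeval fun c => ∏ S ∈ Finset.univ.filter (fun S => c.1 S), X S

/-- The characteristic imset ideal `I_G = ker ψ_G`. -/
noncomputable def cimIdeal (K : Type*) [Field K] (p : ℕ) (G : SimpleGraph (Fin p)) :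
    Ideal (MvPolynomial (imsets p G) K) :=
  RingHom.ker (psiG K p G)

-- ===== auxiliary lemmas =====


section Aux

open Finset

/-- A general fact: the `aeval` sending each variable to a monomial with coefficient 1
is injective provided that the induced map on exponents is injective. -/
lemma aeval_monomial_injective {σ τ K : Type*} [Field K] (v : σ → (τ →₀ ℕ))
    (hf : Function.Injective (Finsupp.linearCombination ℕ v)) :
    Function.Injective (aeval (R := K) fun s => (monomial (v s) (1 : K) : MvPolynomial τ K)) := by
  set f := Finsupp.linearCombination ℕ v with hfdef
  have hmono : ∀ (d : σ →₀ ℕ) (a : K),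
      aeval (fun s => (monomial (v s) (1 : K) : MvPolynomial τ K)) (monomial d a)
        = monomial (f d) a := by
    intro d a
    induction d using Finsupp.induction with
    | zero => simp [monomial_zero']
    | single_add c n d' hcd' hn0 ih =>
      have h1 : (monomial (Finsupp.single c n + d') a : MvPolynomial σ K)
          = monomial (Finsupp.single c n) 1 * monomial d' a := by
        rw [monomial_mul, one_mul]
      rw [h1, map_mul, ih, ← X_pow_eq_monomial, map_pow, aeval_X, monomial_pow, one_pow,
        monomial_mul, one_mul, map_add, hfdef, Finsupp.linearCombination_single]
  intro q1 q2 h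
  have hq : ∀ q, aeval (fun s => (monomial (v s) (1 : K) : MvPolynomial τ K)) q
      = AddMonoidAlgebra.mapDomain f q := by
    intro q
    conv_lhs => rw [← MvPolynomial.support_sum_monomial_coeff q]
    rw [map_sum]
    simp_rw [hmono]
    conv_rhs => rw [← MvPolynomial.support_sum_monomial_coeff q]
    classical
    induction q.support using Finset.induction with
    | empty => simp
    | insert d s hd ih2 =>
      rw [Finset.sum_insert hd, Finset.sum_insert hd, AddMonoidAlgebra.mapDomain_add, ih2,
        ← single_eq_monomial, ← single_eq_monomial, AddMonoidAlgebra.mapDomain_single]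
  rw [hq q1, hq q2] at h
  exact AddMonoidAlgebra.mapDomain_injective hf h
open scoped Classical

variable {p : ℕ}

noncomputable def vset (c : Finset (Fin p) → Prop) : Finset (Fin p) →₀ ℕ :=
  ∑ S ∈ Finset.univ.filter c, Finsupp.single S 1

lemma vset_apply (c : Finset (Fin p) → Prop) (T : Finset (Fin p)) :
    vset c T = if c T then 1 else 0 := by
  rw [vset, Finsupp.finset_sum_apply]
  simp [Finsupp.single_apply, Finset.sum_ite_eq' (Finset.univ.filter c) T (fun _ => 1)]

lemma prod_X_eq {K : Type*} [Field K] (F : Finset (Finset (Fin p))) :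
    (∏ S ∈ F, (X S : MvPolynomial (Finset (Fin p)) K))
      = monomial (∑ S ∈ F, Finsupp.single S 1) 1 := by
  induction F using Finset.induction with
  | empty => simp
  | insert S F hS ih =>
    rw [Finset.prod_insert hS, Finset.sum_insert hS, ih, X, monomial_mul, mul_one]

noncomputable def Aset (istar : Fin p) (c : Finset (Fin p) → Prop) : Finset (Fin p) :=
  Finset.univ.filter fun j => j ≠ istar ∧ ∃ S : Finset (Fin p), c S ∧ 3 ≤ S.card ∧ j ∈ S

lemma mem_Aset {istar : Fin p} {c : Finset (Fin p) → Prop} {j : Fin p} :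
    j ∈ Aset istar c ↔ j ≠ istar ∧ ∃ S : Finset (Fin p), c S ∧ 3 ≤ S.card ∧ j ∈ S := by
  simp [Aset]

lemma istar_not_mem_Aset {istar : Fin p} {c : Finset (Fin p) → Prop} :
    istar ∉ Aset istar c := by
  simp [mem_Aset]

section Star

variable {G : SimpleGraph (Fin p)} {istar : Fin p}
  (hG : ∀ a b, G.Adj a b ↔ (a ≠ b ∧ (a = istar ∨ b = istar)))

include hG

/-- Characterization of characteristic imsets of DAGs whose skeleton is the star graph. -/
lemma cim_star_iff {c : Finset (Fin p) → Prop} (hc : c ∈ imsets p G) (S : Finset (Fin p)) :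
    c S ↔ istar ∈ S ∧ 2 ≤ S.card ∧ (S.card = 2 ∨ S ⊆ insert istar (Aset istar c)) := by
  obtain ⟨D, hsk, rfl⟩ := hc
  have hadj : ∀ a b, (D.edge a b ∨ D.edge b a) ↔ (a ≠ b ∧ (a = istar ∨ b = istar)) := by
    intro a b
    rw [show (D.edge a b ∨ D.edge b a) ↔ D.skeleton.Adj a b from Iff.rfl, hsk]
    exact hG a b
  have h1 : ∀ {k i : Fin p}, D.edge k i → i ≠ istar → k = istar := fun h hi =>
    (((hadj _ _).1 (Or.inl h)).2).resolve_right hi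
  have hpair : ∀ j : Fin p, j ≠ istar → D.cim {j, istar} := by
    intro j hj
    have hcard : ({j, istar} : Finset (Fin p)).card = 2 := Finset.card_pair hj
    rcases (hadj j istar).2 ⟨hj, Or.inr rfl⟩ with h | h
    · exact ⟨by rw [hcard], istar, by simp, fun k hk hkn => by
        rcases Finset.mem_insert.1 hk with rfl | hk
        · exact h
        · exact absurd (Finset.mem_singleton.1 hk) hkn⟩
    · exact ⟨by rw [hcard], j, by simp, fun k hk hkn => by
        rcases Finset.mem_insert.1 hk with rfl | hk
        · exact absurd rfl hkn
        · rw [Finset.mem_singleton.1 hk]; exact h⟩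
  have hmain : ∀ S : Finset (Fin p), D.cim S →
      istar ∈ S ∧ (S.card = 2 ∨ (3 ≤ S.card ∧ ∀ j ∈ S, j ≠ istar → D.edge j istar)) := by
    rintro S ⟨h2, i, hiS, hpa⟩
    by_cases hi : i = istar
    · subst hi
      refine ⟨hiS, ?_⟩
      rcases eq_or_lt_of_le h2 with h | h
      · exact Or.inl h.symm
      · exact Or.inr ⟨h, fun j hj hjn => hpa j hj hjn⟩
    · have hsub : S ⊆ {i, istar} := by
        intro j hj
        by_cases hji : j = i
        · simp [hji]
        · simp [h1 (hpa j hj hji) hi]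
      have hcard2 : S.card ≤ 2 := by
        calc S.card ≤ ({i, istar} : Finset (Fin p)).card := Finset.card_le_card hsub
        _ ≤ 2 := Finset.card_insert_le _ _ |>.trans (by simp)
      have hScard : S.card = 2 := le_antisymm hcard2 h2
      have hSeq : S = {i, istar} := Finset.eq_of_subset_of_card_le hsub
        (by rw [hScard]; exact Finset.card_insert_le _ _ |>.trans (by simp))
      exact ⟨by rw [hSeq]; simp, Or.inl hScard⟩
  have hA : ∀ j ∈ Aset istar D.cim, D.edge j istar := by
    intro j hj
    obtain ⟨hj, S', hcS', h3, hjS'⟩ := mem_Aset.1 hj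
    rcases (hmain S' hcS').2 with h | h
    · omega
    · exact h.2 j hjS' hj
  constructor
  · intro hcS
    obtain ⟨hiS, hrest⟩ := hmain S hcS
    refine ⟨hiS, hcS.1, ?_⟩
    rcases hrest with h | ⟨h3, _⟩
    · exact Or.inl h
    · refine Or.inr fun j hj => ?_
      by_cases hji : j = istar
      · simp [hji]
      · exact Finset.mem_insert.2 (Or.inr (mem_Aset.2 ⟨hji, S, hcS, h3, hj⟩))
  · rintro ⟨hiS, h2, hd⟩
    rcases hd with h2' | hsub
    · obtain ⟨a, b, hab, rfl⟩ := Finset.card_eq_two.1 h2'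
      rcases Finset.mem_insert.1 hiS with rfl | hb
      · rw [Finset.pair_comm]
        exact hpair b (fun h => hab (by rw [h]))
      · obtain rfl : b = istar := (Finset.mem_singleton.1 hb).symm
        exact hpair a hab
    · refine ⟨h2, istar, hiS, fun j hj hjn => ?_⟩
      rcases Finset.mem_insert.1 (hsub hj) with h | h
      · exact absurd h hjn
      · exact hA j h

lemma eq_of_Aset_eq {c c' : Finset (Fin p) → Prop} (hc : c ∈ imsets p G)
    (hc' : c' ∈ imsets p G) (h : Aset istar c = Aset istar c') : c = c' := by
  funext S
  exact propext ((cim_star_iff hG hc S).trans (h ▸ (cim_star_iff hG hc' S)).symm)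

lemma two_le_card_Aset {c : Finset (Fin p) → Prop} (hc : c ∈ imsets p G)
    (hne : (Aset istar c).Nonempty) : 2 ≤ (Aset istar c).card := by
  obtain ⟨j, hj⟩ := hne
  obtain ⟨hj, S, hcS, h3, hjS⟩ := mem_Aset.1 hj
  obtain ⟨hiS, _, hd⟩ := (cim_star_iff hG hc S).1 hcS
  rcases hd with h | hsub
  · omega
  · have herase : S.erase istar ⊆ Aset istar c := Finset.subset_insert_iff.1 hsub
    have : 2 ≤ (S.erase istar).card := by
      rw [Finset.card_erase_of_mem hiS]; omega
    exact this.trans (Finset.card_le_card herase)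

lemma cim_pair {c' : Finset (Fin p) → Prop} (hc' : c' ∈ imsets p G) {j : Fin p}
    (hj : j ≠ istar) : c' {j, istar} := by
  rw [cim_star_iff hG hc']
  refine ⟨by simp, by rw [Finset.card_pair hj], Or.inl (Finset.card_pair hj)⟩

lemma cim_coord {c c' : Finset (Fin p) → Prop} (hc : c ∈ imsets p G)
    (hc' : c' ∈ imsets p G) (hne : (Aset istar c).Nonempty) :
    c' (insert istar (Aset istar c)) ↔ Aset istar c ⊆ Aset istar c' := by
  have hcard : (insert istar (Aset istar c)).card = (Aset istar c).card + 1 :=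
    Finset.card_insert_of_notMem istar_not_mem_Aset
  have h2 : 2 ≤ (Aset istar c).card := two_le_card_Aset hG hc hne
  rw [cim_star_iff hG hc']
  constructor
  · rintro ⟨-, -, h | hsub⟩
    · omega
    · intro j hj
      rcases Finset.mem_insert.1 (hsub (Finset.mem_insert_of_mem hj)) with rfl | h
      · exact absurd hj istar_not_mem_Aset
      · exact h
  · intro hsub
    refine ⟨Finset.mem_insert_self _ _, by omega, Or.inr ?_⟩
    exact Finset.insert_subset_insert _ hsub

end Star

end Aux

/-- for the star graph `G` with center `i✶` (and `p ≥ 2`), the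
characteristic imset ideal `I_G` is the zero ideal, i.e. `ψ_G` is injective on the
characteristic imsets of the Markov equivalence classes of DAGs with skeleton `G`. -/
theorem stmt11 (K : Type*) [Field K] (p : ℕ) (hp : 2 ≤ p)
    (G : SimpleGraph (Fin p)) (istar : Fin p)
    (hG : ∀ a b, G.Adj a b ↔ (a ≠ b ∧ (a = istar ∨ b = istar))) :
    cimIdeal K p G = ⊥ := by
  classical
  obtain ⟨j₀, hj₀⟩ : ∃ j : Fin p, j ≠ istar :=
    Fintype.exists_ne_of_one_lt_card (by simp; omega) istar
  set v : imsets p G → (Finset (Fin p) →₀ ℕ) := fun c => vset c.1 with hv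
  -- injectivity of the exponent map
  have hfin : Function.Injective (Finsupp.linearCombination ℕ v) := by
    intro d e hde
    set t : Finset ↥(imsets p G) := d.support ∪ e.support with ht
    have expand : ∀ (g : ↥(imsets p G) →₀ ℕ), g.support ⊆ t → ∀ T : Finset (Fin p),
        (Finsupp.linearCombination ℕ v g) T
          = ∑ c' ∈ t, g c' * (if c'.1 T then 1 else 0) := by
      intro g hg T
      rw [Finsupp.linearCombination_apply, Finsupp.sum, Finsupp.finset_sum_apply]
      rw [Finset.sum_subset hg (fun c' _ hc' => by
        rw [Finsupp.notMem_support_iff.1 hc', zero_smul, Finsupp.coe_zero, Pi.zero_apply])]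
      exact Finset.sum_congr rfl fun c' _ => by
        rw [Finsupp.smul_apply, smul_eq_mul, hv, vset_apply]
    have key : ∀ n : ℕ, ∀ c : ↥(imsets p G), p - (Aset istar c.1).card ≤ n → d c = e c := by
      intro n
      induction n with
      | zero =>
        intro c hc0
        exfalso
        have hlt : (Aset istar c.1).card < p := by
          have hne : Aset istar c.1 ≠ Finset.univ := fun h =>
            istar_not_mem_Aset (istar := istar) (c := c.1) (h ▸ Finset.mem_univ istar)
          simpa using (Finset.card_lt_iff_ne_univ _).2 hne
        omega
      | succ n ih =>
        intro c hcn
        by_cases hcsupp : c ∈ t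
        · set A := Aset istar c.1 with hA
          set T : Finset (Fin p) := if A = ∅ then {j₀, istar} else insert istar A with hT
          have hTmem : ∀ c' : ↥(imsets p G), c'.1 T ↔ A ⊆ Aset istar c'.1 := by
            intro c'
            by_cases hAe : A = ∅
            · rw [hT, if_pos hAe, hAe]
              simp only [Finset.empty_subset, iff_true]
              exact cim_pair hG c'.2 hj₀
            · rw [hT, if_neg hAe]
              exact cim_coord hG c.2 c'.2 (Finset.nonempty_of_ne_empty hAe)
          have h1 : ∑ c' ∈ t, d c' * (if c'.1 T then 1 else 0)
              = ∑ c' ∈ t, e c' * (if c'.1 T then 1 else 0) := by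
            rw [← expand d Finset.subset_union_left T, ← expand e Finset.subset_union_right T,
              hde]
          rw [← Finset.add_sum_erase t _ hcsupp, ← Finset.add_sum_erase t _ hcsupp] at h1
          have hrest : ∑ c' ∈ t.erase c, d c' * (if c'.1 T then 1 else 0)
              = ∑ c' ∈ t.erase c, e c' * (if c'.1 T then 1 else 0) := by
            refine Finset.sum_congr rfl fun c' hc' => ?_
            by_cases hc'T : c'.1 T
            · rw [if_pos hc'T]
              have hsub : A ⊆ Aset istar c'.1 := (hTmem c').1 hc'T
              have hne : Aset istar c'.1 ≠ A := fun h =>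
                (Finset.mem_erase.1 hc').1
                  (Subtype.ext (eq_of_Aset_eq hG c'.2 c.2 (h.trans hA)))
              have hssub : A ⊂ Aset istar c'.1 :=
                Finset.ssubset_iff_subset_ne.2 ⟨hsub, fun h => hne h.symm⟩
              have hlt : A.card < (Aset istar c'.1).card := Finset.card_lt_card hssub
              rw [ih c' (by omega)]
            · simp [if_neg hc'T]
          rw [← hrest] at h1
          have h2 := Nat.add_right_cancel h1
          rw [if_pos ((hTmem c).2 (Finset.Subset.refl A)), mul_one, mul_one] at h2
          exact h2
        · have h0 : d c = 0 := Finsupp.notMem_support_iff.1 fun h => hcsupp (Finset.mem_union_left _ h)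
          have h0' : e c = 0 := Finsupp.notMem_support_iff.1 fun h => hcsupp (Finset.mem_union_right _ h)
          rw [h0, h0']
    exact Finsupp.ext fun c => key p c (Nat.sub_le _ _)
  -- identify psiG with the monomial aeval
  have hpsi : psiG K p G = aeval (R := K)
      (fun c : imsets p G => (monomial (v c) (1 : K) : MvPolynomial (Finset (Fin p)) K)) := by
    rw [psiG]
    congr 1
    funext c
    rw [prod_X_eq]
    rfl
  have hinj : Function.Injective (psiG K p G) := by
    rw [hpsi]
    exact aeval_monomial_injective v hfin
  rw [cimIdeal]
  exact (RingHom.injective_iff_ker_eq_bot _).1 hinj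
end

section
/- Let m, n ≥ 4 and let Q_{m,n} be the cycle gluing rule between the paths P'_m and P_n. Then the characteristic imset ideal of the cycle on n + m − 4 vertices satisfies I_{C_{n+m−4}} = I_{P'_m} ×_{Q_{m,n}} I_{P_n}, i.e., I_{C_{n+m−4}} = φ_{Q_{m,n}}^{-1}(I_{P'_m} + I_{P_n}). -/
open MvPolynomial

/-- Index sets for the Markov equivalence classes of the path `P_n` with vertices
`1, …, n` in path order: sets `S ⊆ {2, …, n-1}` of pairwise non-consecutive integers
(the centers of the v-structures). -/
def PnIdx (n : ℕ) : Set (Finset ℕ) :=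
  { S | (∀ i ∈ S, 2 ≤ i ∧ i ≤ n - 1) ∧ ∀ i ∈ S, i + 1 ∉ S }

/-- Index sets for the Markov equivalence classes of the path `P'_m` with vertices
`n-1, n, n+1, …, n+m-4, 1, 2` in path order: sets of inner vertices (elements of
`{n, …, n+m-4} ∪ {1}`) with no two consecutive in this order. -/
def PmIdx (n m : ℕ) : Set (Finset ℕ) :=
  { S | (∀ i ∈ S, i = 1 ∨ (n ≤ i ∧ i ≤ n + m - 4)) ∧ (∀ i ∈ S, i + 1 ∉ S) ∧
      ¬ (n + m - 4 ∈ S ∧ 1 ∈ S) }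

/-- Index sets for the Markov equivalence classes of the cycle `C_N` with vertices
`1, …, N`: nonempty sets of pairwise cyclically non-consecutive integers mod `N`. -/
def CIdx (N : ℕ) : Set (Finset ℕ) :=
  { S | S.Nonempty ∧ (∀ i ∈ S, 1 ≤ i ∧ i ≤ N) ∧
      ∀ i ∈ S, ∀ j ∈ S, ((i : ZMod N) + 1 ≠ (j : ZMod N)) }

/-- The cyclic successor of a vertex `i ∈ {1, …, N}`. -/
def nxt (N i : ℕ) : ℕ := if i = N then 1 else i + 1

/-- The cyclic predecessor of a vertex `i ∈ {1, …, N}`. -/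
def prv (N i : ℕ) : ℕ := if i = 1 then N else i - 1

/-- The triple `{i - 1, i, i + 1}` (cyclically mod `N`, with representatives in
`{1, …, N}`); `c(S) = 1` for such `S` exactly when `i` is the center of a collider
`i-1 → i ← i+1`. -/
def trip (N i : ℕ) : Finset ℕ := {prv N i, i, nxt N i}

/-- The monomial map of the characteristic imset ideal of the path `P_n` (inside the
cycle with `N` vertices): `y_S ↦ ∏_{W : c(W)=1} t_W`, where `c(W) = 1` exactly for the
edges `{i, i+1}` of `P_n` and the triples centered at the elements of `S`. -/
noncomputable def psiPn (K : Type*) [Field K] (n N : ℕ) :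
    MvPolynomial (PnIdx n) K →ₐ[K] MvPolynomial (Finset ℕ) K :=
  aeval fun S =>
    (∏ i ∈ Finset.Icc 1 (n - 1), X ({i, i + 1} : Finset ℕ)) * ∏ i ∈ S.1, X (trip N i)

/-- The monomial map of the characteristic imset ideal of the path `P'_m` with
vertices `n-1, n, …, n+m-4, 1, 2` (inside the cycle with `N = n + m - 4` vertices). -/
noncomputable def psiPm (K : Type*) [Field K] (n m : ℕ) :
    MvPolynomial (PmIdx n m) K →ₐ[K] MvPolynomial (Finset ℕ) K :=
  aeval fun S =>
    (∏ i ∈ insert 1 (Finset.Icc (n - 1) (n + m - 4)),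
        X ({i, nxt (n + m - 4) i} : Finset ℕ)) * ∏ i ∈ S.1, X (trip (n + m - 4) i)

/-- The monomial map of the characteristic imset ideal of the cycle `C_N`. -/
noncomputable def psiC (K : Type*) [Field K] (N : ℕ) :
    MvPolynomial (CIdx N) K →ₐ[K] MvPolynomial (Finset ℕ) K :=
  aeval fun S =>
    (∏ i ∈ Finset.Icc 1 N, X ({i, nxt N i} : Finset ℕ)) * ∏ i ∈ S.1, X (trip N i)

/-- The gluing rule `Q_{m,n}`: pairs `(S', S)` such that no two elements of `S' ∪ S`
are cyclically consecutive modulo `n + m - 4` and `S' ∪ S ≠ ∅` (equivalently, the two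
patterns have no v-structures at cyclically consecutive vertices and at least one
v-structure occurs). -/
def Qmn (n m : ℕ) : Set (↥(PmIdx n m) × ↥(PnIdx n)) :=
  { q | (q.1.1 ∪ q.2.1 : Finset ℕ).Nonempty ∧
      ∀ i ∈ (q.1.1 ∪ q.2.1 : Finset ℕ), ∀ j ∈ (q.1.1 ∪ q.2.1 : Finset ℕ),
        ((i : ZMod (n + m - 4)) + 1 ≠ (j : ZMod (n + m - 4))) }


/-! ### Auxiliary machinery for monomial (toric) maps -/

open Finsupp

noncomputable section AuxMachinery

/-- Exponent map: the additive hom `(σ →₀ ℕ) →+ M` sending `single s k ↦ k • e s`. -/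
def expo {σ : Type*} {M : Type*} [AddCommMonoid M] (e : σ → M) : (σ →₀ ℕ) →+ M :=
  Finsupp.liftAddHom fun s => (smulAddHom ℕ M).flip (e s)

@[simp] lemma expo_single {σ M : Type*} [AddCommMonoid M] (e : σ → M) (s : σ) (k : ℕ) :
    expo e (Finsupp.single s k) = k • e s := by
  simp [expo]

lemma expo_apply {σ M : Type*} [AddCommMonoid M] (e : σ → M) (u : σ →₀ ℕ) :
    expo e u = u.sum fun s k => k • e s := by
  simp [expo, Finsupp.liftAddHom_apply]; rfl

lemma expo_support_subset {σ V : Type*} {e : σ → (V →₀ ℕ)} {T : Finset V}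
    (h : ∀ s, (e s).support ⊆ T) (u : σ →₀ ℕ) : (expo e u).support ⊆ T := by
  classical
  rw [expo_apply]
  refine Finsupp.support_sum.trans (Finset.biUnion_subset.2 fun s _ => ?_)
  exact Finsupp.support_smul.trans (h s)

lemma expo_add_split {σ M : Type*} [AddCommMonoid M] (f g h : σ → M)
    (H : ∀ s, f s = g s + h s) (u : σ →₀ ℕ) : expo f u = expo g u + expo h u := by
  induction u using Finsupp.induction with
  | zero => simp
  | single_add a b u _ _ ih =>
      rw [map_add, map_add, map_add, expo_single, expo_single, expo_single, ih, H a, smul_add]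
      abel

lemma expo_comp_addHom {σ M P : Type*} [AddCommMonoid M] [AddCommMonoid P]
    (T : M →+ P) (e : σ → M) (u : σ →₀ ℕ) :
    expo (fun s => T (e s)) u = T (expo e u) := by
  induction u using Finsupp.induction with
  | zero => simp
  | single_add a b u _ _ ih =>
      rw [map_add, map_add, expo_single, expo_single, map_add, ih, map_nsmul]

lemma expo_expo_single {σ τ M : Type*} [AddCommMonoid M] (g : σ → τ) (e : τ → M) (u : σ →₀ ℕ) :
    expo e (expo (fun s => Finsupp.single (g s) (1:ℕ)) u) = expo (fun s => e (g s)) u := by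
  induction u using Finsupp.induction with
  | zero => simp
  | single_add a b u _ _ ih =>
      simp only [map_add, map_nsmul, expo_single, ih, one_smul]

lemma mapDomain_apply_of_not_mem {α β M : Type*} [AddCommMonoid M] {f : α → β} (c : α →₀ M)
    {b : β} (h : ∀ a ∈ c.support, f a ≠ b) : Finsupp.mapDomain f c b = 0 := by
  classical
  refine Finsupp.notMem_support_iff.1 fun hmem => ?_
  obtain ⟨a, ha, rfl⟩ := Finset.mem_image.1 (Finsupp.mapDomain_support hmem)
  exact h a ha rfl

variable {K : Type*} [Field K] {σ V W : Type*}

lemma alg_monomial (f : MvPolynomial σ K →ₐ[K] MvPolynomial V K) (e : σ → (V →₀ ℕ))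
    (hf : ∀ s, f (X s) = monomial (e s) 1) (u : σ →₀ ℕ) (c : K) :
    f (monomial u c) = monomial (expo e u) c := by
  induction u using Finsupp.induction with
  | zero => simp [monomial_zero', MvPolynomial.algHom_C]
  | single_add a b u _ _ ih =>
      rw [map_add, expo_single]
      have : (monomial (Finsupp.single a b + u)) c
          = (monomial (Finsupp.single a b) 1) * monomial u c := by
        rw [monomial_mul, one_mul]
      rw [this, map_mul, ih, ← X_pow_eq_monomial, map_pow, hf, monomial_pow,
        monomial_mul, one_pow, one_mul]

open scoped Classical in
lemma zero_iff (f : MvPolynomial σ K →ₐ[K] MvPolynomial V K) (e : σ → (V →₀ ℕ))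
    (hf : ∀ s, f (X s) = monomial (e s) 1) (p : MvPolynomial σ K) :
    f p = 0 ↔ ∀ μ, (∑ u ∈ p.support, if expo e u = μ then p.coeff u else 0) = 0 := by
  classical
  conv_lhs => rw [← support_sum_monomial_coeff p]
  rw [map_sum]
  simp_rw [alg_monomial f e hf]
  rw [MvPolynomial.ext_iff]
  refine forall_congr' fun μ => ?_
  rw [coeff_sum, coeff_zero]
  refine Eq.congr (Finset.sum_congr rfl fun u _ => ?_) rfl
  rw [MvPolynomial.coeff_monomial]

open scoped Classical in
lemma ker_refine (f : MvPolynomial σ K →ₐ[K] MvPolynomial V K)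
    (g : MvPolynomial σ K →ₐ[K] MvPolynomial W K)
    (e : σ → (V →₀ ℕ)) (d : σ → (W →₀ ℕ))
    (hf : ∀ s, f (X s) = monomial (e s) 1) (hg : ∀ s, g (X s) = monomial (d s) 1)
    (h : ∀ u u', expo d u = expo d u' → expo e u = expo e u') :
    RingHom.ker g ≤ RingHom.ker f := by
  intro p hp
  rw [RingHom.mem_ker] at hp ⊢
  rw [zero_iff g d hg] at hp
  rw [zero_iff f e hf]
  intro ν
  rw [← Finset.sum_filter]
  set s := p.support.filter (fun u => expo e u = ν) with hs
  rw [← Finset.sum_fiberwise_of_maps_to (g := fun u => expo d u) (t := s.image fun u => expo d u)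
    (fun x hx => Finset.mem_image_of_mem _ hx)]
  refine Finset.sum_eq_zero fun μ hμ => ?_
  obtain ⟨u₀, hu₀s, hu₀⟩ := Finset.mem_image.1 hμ
  have hfil : s.filter (fun u => expo d u = μ) = p.support.filter (fun u => expo d u = μ) := by
    ext u
    simp only [hs, Finset.mem_filter, and_assoc]
    constructor
    · tauto
    · rintro ⟨h1, h2⟩
      have hu₀' := Finset.mem_filter.1 hu₀s
      refine ⟨h1, ?_, h2⟩
      rw [h u u₀ (by rw [h2, hu₀]), hu₀'.2]
  rw [hfil, Finset.sum_filter]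
  exact hp μ

open scoped Classical in
lemma ker_le_of_binomials (f : MvPolynomial σ K →ₐ[K] MvPolynomial V K)
    (e : σ → (V →₀ ℕ)) (hf : ∀ s, f (X s) = monomial (e s) 1)
    (J : Ideal (MvPolynomial σ K))
    (hJ : ∀ u u', expo e u = expo e u' →
      ((monomial u 1 : MvPolynomial σ K) - monomial u' 1) ∈ J) :
    RingHom.ker f ≤ J := by
  intro p hp
  rw [RingHom.mem_ker] at hp
  generalize hk : p.support.card = k
  induction k using Nat.strong_induction_on generalizing p with
  | _ k ih =>
    rcases eq_or_ne p 0 with rfl | hp0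
    · exact J.zero_mem
    obtain ⟨u₁, hu₁⟩ := (MvPolynomial.support_nonempty.2 hp0)
    have hfib := (zero_iff f e hf p).1 hp (expo e u₁)
    have hex : ∃ u₀ ∈ p.support, u₀ ≠ u₁ ∧ expo e u₀ = expo e u₁ := by
      by_contra hno
      push_neg at hno
      have hsum : (∑ u ∈ p.support, if expo e u = expo e u₁ then p.coeff u else 0)
          = if expo e u₁ = expo e u₁ then p.coeff u₁ else 0 :=
        Finset.sum_eq_single_of_mem u₁ hu₁ (fun b hb hbne => by rw [if_neg (hno b hb hbne)])
      rw [hsum, if_pos rfl] at hfib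
      exact (MvPolynomial.mem_support_iff.1 hu₁) hfib
    obtain ⟨u₀, hu₀mem, hu₀ne, hu₀e⟩ := hex
    set c := p.coeff u₁ with hc
    set b : MvPolynomial σ K := monomial u₁ 1 - monomial u₀ 1 with hb
    have hbJ : b ∈ J := hJ u₁ u₀ hu₀e.symm
    have hbker : f b = 0 := by
      rw [hb, map_sub, alg_monomial f e hf, alg_monomial f e hf, hu₀e, sub_self]
    set p' : MvPolynomial σ K := p - C c * b with hp'
    have hcoeff : ∀ u, p'.coeff u = p.coeff u - c * ((if u₁ = u then 1 else 0)
        - (if u₀ = u then 1 else 0)) := by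
      intro u
      simp [hp', hb, MvPolynomial.coeff_monomial, mul_sub]
    have hsupp : p'.support ⊆ p.support.erase u₁ := by
      intro u hu
      rw [MvPolynomial.mem_support_iff, hcoeff] at hu
      rcases eq_or_ne u u₁ with rfl | hne
      · rw [if_pos rfl, if_neg hu₀ne] at hu
        simp [hc] at hu
      · rcases eq_or_ne u u₀ with rfl | h2
        · exact Finset.mem_erase.2 ⟨hne, hu₀mem⟩
        · refine Finset.mem_erase.2 ⟨hne, MvPolynomial.mem_support_iff.2 fun h0 => hu ?_⟩
          rw [h0, if_neg (fun h => hne h.symm), if_neg (fun h => h2 h.symm)]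
          ring
    have hker' : f p' = 0 := by
      rw [hp', map_sub, map_mul, hbker, mul_zero, sub_zero, hp]
    have hcard : p'.support.card < k := by
      calc p'.support.card ≤ (p.support.erase u₁).card := Finset.card_le_card hsupp
      _ < p.support.card := Finset.card_erase_lt_of_mem hu₁
      _ = k := hk
    have hmem := ih _ hcard hker' rfl
    have : p = p' + C c * b := by rw [hp']; ring
    rw [this]
    exact J.add_mem hmem (J.mul_mem_left _ hbJ)

end AuxMachinery

/-! ### Combinatorial facts about `nxt`, `prv`, `trip` -/

lemma nxt_spec (N j : ℕ) : (j = N ∧ nxt N j = 1) ∨ (j ≠ N ∧ nxt N j = j + 1) := by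
  unfold nxt; split_ifs <;> simp_all

lemma prv_spec (N j : ℕ) : (j = 1 ∧ prv N j = N) ∨ (j ≠ 1 ∧ prv N j = j - 1) := by
  unfold prv; split_ifs <;> simp_all

lemma nxt_ne (N : ℕ) (hN : 4 ≤ N) (j : ℕ) : nxt N j ≠ j := by
  unfold nxt; split_ifs <;> omega

lemma nxt_one {N : ℕ} (hN : 4 ≤ N) : nxt N 1 = 2 := by unfold nxt; rw [if_neg (by omega)]

lemma trip_interior {N i : ℕ} (h1 : 2 ≤ i) (h2 : i < N) :
    trip N i = {i - 1, i, i + 1} := by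
  unfold trip prv nxt
  rw [if_neg (by omega), if_neg (by omega)]

lemma trip_one {N : ℕ} (hN : 4 ≤ N) : trip N 1 = {N, 1, 2} := by
  unfold trip prv nxt
  rw [if_pos rfl, if_neg (by omega)]

lemma trip_top {N : ℕ} (hN : 4 ≤ N) : trip N N = {N - 1, N, 1} := by
  unfold trip prv nxt
  rw [if_neg (by omega), if_pos rfl]

lemma trip_injOn {N : ℕ} (hN : 4 ≤ N) : Set.InjOn (trip N) (Set.Icc 1 N) := by
  intro i hi j hj h
  simp only [Set.mem_Icc] at hi hj
  have ci : i = 1 ∨ i = N ∨ (2 ≤ i ∧ i < N) := by omega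
  have cj : j = 1 ∨ j = N ∨ (2 ≤ j ∧ j < N) := by omega
  rcases ci with hc | hc | ⟨hi1, hi2⟩ <;> rcases cj with hd | hd | ⟨hj1, hj2⟩
  · rw [hc, hd]
  · rw [hc, hd] at h ⊢
    rw [trip_one hN, trip_top hN] at h
    have H1 := Finset.ext_iff.mp h 1
    have H2 := Finset.ext_iff.mp h 2
    have H3 := Finset.ext_iff.mp h (i - 1)
    have H4 := Finset.ext_iff.mp h i
    have H5 := Finset.ext_iff.mp h (i + 1)
    have H6 := Finset.ext_iff.mp h (j - 1)
    have H7 := Finset.ext_iff.mp h j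
    have H8 := Finset.ext_iff.mp h (N - 1)
    have H9 := Finset.ext_iff.mp h N
    simp only [Finset.mem_insert, Finset.mem_singleton, eq_self_iff_true, true_iff, iff_true, true_or, or_true] at H1 H2 H3 H4 H5 H6 H7 H8 H9
    omega
  · rw [hc] at h ⊢
    rw [trip_one hN, trip_interior hj1 hj2] at h
    have H1 := Finset.ext_iff.mp h 1
    have H2 := Finset.ext_iff.mp h 2
    have H3 := Finset.ext_iff.mp h (i - 1)
    have H4 := Finset.ext_iff.mp h i
    have H5 := Finset.ext_iff.mp h (i + 1)
    have H6 := Finset.ext_iff.mp h (j - 1)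
    have H7 := Finset.ext_iff.mp h j
    have H8 := Finset.ext_iff.mp h (N - 1)
    have H9 := Finset.ext_iff.mp h N
    simp only [Finset.mem_insert, Finset.mem_singleton, eq_self_iff_true, true_iff, iff_true, true_or, or_true] at H1 H2 H3 H4 H5 H6 H7 H8 H9
    omega
  · rw [hc, hd] at h ⊢
    rw [trip_top hN, trip_one hN] at h
    have H1 := Finset.ext_iff.mp h 1
    have H2 := Finset.ext_iff.mp h 2
    have H3 := Finset.ext_iff.mp h (i - 1)
    have H4 := Finset.ext_iff.mp h i
    have H5 := Finset.ext_iff.mp h (i + 1)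
    have H6 := Finset.ext_iff.mp h (j - 1)
    have H7 := Finset.ext_iff.mp h j
    have H8 := Finset.ext_iff.mp h (N - 1)
    have H9 := Finset.ext_iff.mp h N
    simp only [Finset.mem_insert, Finset.mem_singleton, eq_self_iff_true, true_iff, iff_true, true_or, or_true] at H1 H2 H3 H4 H5 H6 H7 H8 H9
    omega
  · rw [hc, hd]
  · rw [hc] at h ⊢
    rw [trip_top hN, trip_interior hj1 hj2] at h
    have H1 := Finset.ext_iff.mp h 1
    have H2 := Finset.ext_iff.mp h 2
    have H3 := Finset.ext_iff.mp h (i - 1)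
    have H4 := Finset.ext_iff.mp h i
    have H5 := Finset.ext_iff.mp h (i + 1)
    have H6 := Finset.ext_iff.mp h (j - 1)
    have H7 := Finset.ext_iff.mp h j
    have H8 := Finset.ext_iff.mp h (N - 1)
    have H9 := Finset.ext_iff.mp h N
    simp only [Finset.mem_insert, Finset.mem_singleton, eq_self_iff_true, true_iff, iff_true, true_or, or_true] at H1 H2 H3 H4 H5 H6 H7 H8 H9
    omega
  · rw [hd] at h ⊢
    rw [trip_interior hi1 hi2, trip_one hN] at h
    have H1 := Finset.ext_iff.mp h 1
    have H2 := Finset.ext_iff.mp h 2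
    have H3 := Finset.ext_iff.mp h (i - 1)
    have H4 := Finset.ext_iff.mp h i
    have H5 := Finset.ext_iff.mp h (i + 1)
    have H6 := Finset.ext_iff.mp h (j - 1)
    have H7 := Finset.ext_iff.mp h j
    have H8 := Finset.ext_iff.mp h (N - 1)
    have H9 := Finset.ext_iff.mp h N
    simp only [Finset.mem_insert, Finset.mem_singleton, eq_self_iff_true, true_iff, iff_true, true_or, or_true] at H1 H2 H3 H4 H5 H6 H7 H8 H9
    omega
  · rw [hd] at h ⊢
    rw [trip_interior hi1 hi2, trip_top hN] at h
    have H1 := Finset.ext_iff.mp h 1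
    have H2 := Finset.ext_iff.mp h 2
    have H3 := Finset.ext_iff.mp h (i - 1)
    have H4 := Finset.ext_iff.mp h i
    have H5 := Finset.ext_iff.mp h (i + 1)
    have H6 := Finset.ext_iff.mp h (j - 1)
    have H7 := Finset.ext_iff.mp h j
    have H8 := Finset.ext_iff.mp h (N - 1)
    have H9 := Finset.ext_iff.mp h N
    simp only [Finset.mem_insert, Finset.mem_singleton, eq_self_iff_true, true_iff, iff_true, true_or, or_true] at H1 H2 H3 H4 H5 H6 H7 H8 H9
    omega
  · rw [trip_interior hi1 hi2, trip_interior hj1 hj2] at h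
    have H1 := Finset.ext_iff.mp h 1
    have H2 := Finset.ext_iff.mp h 2
    have H3 := Finset.ext_iff.mp h (i - 1)
    have H4 := Finset.ext_iff.mp h i
    have H5 := Finset.ext_iff.mp h (i + 1)
    have H6 := Finset.ext_iff.mp h (j - 1)
    have H7 := Finset.ext_iff.mp h j
    have H8 := Finset.ext_iff.mp h (N - 1)
    have H9 := Finset.ext_iff.mp h N
    simp only [Finset.mem_insert, Finset.mem_singleton, eq_self_iff_true, true_iff, iff_true, true_or, or_true] at H1 H2 H3 H4 H5 H6 H7 H8 H9
    omega

lemma card_trip {N : ℕ} (hN : 4 ≤ N) {i : ℕ} (hi : 1 ≤ i) (hi' : i ≤ N) :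
    (trip N i).card = 3 := by
  have hpi := prv_spec N i
  have hni := nxt_spec N i
  rw [trip, Finset.card_insert_of_notMem, Finset.card_insert_of_notMem,
    Finset.card_singleton]
  · simp only [Finset.mem_singleton]; omega
  · simp only [Finset.mem_insert, Finset.mem_singleton]; push_neg; omega

lemma pair_ne_trip {N : ℕ} (hN : 4 ≤ N) {a b i : ℕ} (hab : a ≠ b)
    (hi : 1 ≤ i) (hi' : i ≤ N) : ({a, b} : Finset ℕ) ≠ trip N i := by
  intro h
  have := congrArg Finset.card h
  rw [Finset.card_pair hab, card_trip hN hi hi'] at this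
  omega

lemma edge_eq_12 {N : ℕ} (hN : 4 ≤ N) {j : ℕ} (hj : 1 ≤ j) (hj' : j ≤ N)
    (h : ({j, nxt N j} : Finset ℕ) = {1, 2}) : j = 1 := by
  have H := fun x => Finset.ext_iff.mp h x
  simp only [Finset.mem_insert, Finset.mem_singleton] at H
  have hnj := nxt_spec N j
  have H1 := H j
  have H2 := H (nxt N j)
  have H3 := H 1
  have H4 := H 2
  omega

/-! ### The edge and exponent vectors of the three monomial maps -/

noncomputable section AuxExponents

open Finsupp

def edgesC (N : ℕ) : Finset ℕ →₀ ℕ := ∑ i ∈ Finset.Icc 1 N, Finsupp.single {i, nxt N i} 1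

def edgesM (n N : ℕ) : Finset ℕ →₀ ℕ :=
  ∑ i ∈ insert 1 (Finset.Icc (n-1) N), Finsupp.single {i, nxt N i} 1

def edgesP (n : ℕ) : Finset ℕ →₀ ℕ := ∑ i ∈ Finset.Icc 1 (n-1), Finsupp.single {i, i+1} 1

lemma sum_single_apply_zero {t : Finset ℕ} {a : ℕ → Finset ℕ} {b : Finset ℕ}
    (h : ∀ j ∈ t, a j ≠ b) : (∑ j ∈ t, Finsupp.single (a j) (1:ℕ)) b = 0 := by
  rw [Finsupp.finset_sum_apply]
  exact Finset.sum_eq_zero fun j hj => Finsupp.single_eq_of_ne' (h j hj)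


lemma support_sum_single_subset {ι : Type*} [DecidableEq ι] (t : Finset ι) :
    (∑ i ∈ t, Finsupp.single i (1:ℕ)).support ⊆ t :=
  Finsupp.support_finset_sum.trans (Finset.biUnion_subset.2 fun i hi =>
    Finsupp.support_single_subset.trans (Finset.singleton_subset_iff.2 hi))

lemma edgesC_trip {N : ℕ} (hN : 4 ≤ N) {i : ℕ} (hi : 1 ≤ i) (hi' : i ≤ N) :
    edgesC N (trip N i) = 0 :=
  sum_single_apply_zero fun j _ => pair_ne_trip hN (Ne.symm (nxt_ne N hN j)) hi hi'

lemma edgesM_trip {n N : ℕ} (hN : 4 ≤ N) {i : ℕ} (hi : 1 ≤ i) (hi' : i ≤ N) :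
    edgesM n N (trip N i) = 0 :=
  sum_single_apply_zero fun j _ => pair_ne_trip hN (Ne.symm (nxt_ne N hN j)) hi hi'

lemma edgesP_trip {n N : ℕ} (hN : 4 ≤ N) {i : ℕ} (hi : 1 ≤ i) (hi' : i ≤ N) :
    edgesP n (trip N i) = 0 :=
  sum_single_apply_zero fun j _ => pair_ne_trip hN (by omega) hi hi'

lemma edgesC_12 {N : ℕ} (hN : 4 ≤ N) : edgesC N {1, 2} = 1 := by
  rw [edgesC, Finsupp.finset_sum_apply]
  have h0 : ∀ b ∈ Finset.Icc 1 N, b ≠ 1 →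
      (Finsupp.single ({b, nxt N b} : Finset ℕ) (1:ℕ)) {1,2} = 0 := by
    intro b hb hb1
    simp only [Finset.mem_Icc] at hb
    exact Finsupp.single_eq_of_ne' fun h => hb1 (edge_eq_12 hN hb.1 hb.2 h)
  rw [Finset.sum_eq_single_of_mem 1 (by simp only [Finset.mem_Icc]; omega) h0,
    nxt_one hN, Finsupp.single_eq_same]

lemma edgesM_12 {n N : ℕ} (hn : 4 ≤ n) (hnN : n ≤ N) (hN : 4 ≤ N) : edgesM n N {1, 2} = 1 := by
  rw [edgesM, Finsupp.finset_sum_apply]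
  have h0 : ∀ b ∈ insert 1 (Finset.Icc (n-1) N), b ≠ 1 →
      (Finsupp.single ({b, nxt N b} : Finset ℕ) (1:ℕ)) {1,2} = 0 := by
    intro b hb hb1
    simp only [Finset.mem_insert, Finset.mem_Icc] at hb
    rcases hb with rfl | hb
    · exact absurd rfl hb1
    · exact Finsupp.single_eq_of_ne' fun h => hb1 (edge_eq_12 hN (by omega) hb.2 h)
  rw [Finset.sum_eq_single_of_mem 1 (Finset.mem_insert_self 1 _) h0,
    nxt_one hN, Finsupp.single_eq_same]

/-- Exponent vector of the cycle map. -/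
def eCmap (N : ℕ) (S : ↥(CIdx N)) : Finset ℕ →₀ ℕ :=
  edgesC N + ∑ i ∈ (S : Finset ℕ), Finsupp.single (trip N i) 1

/-- Exponent vector of the `P'_m` map. -/
def eMmap (n m : ℕ) (S : ↥(PmIdx n m)) : Finset ℕ →₀ ℕ :=
  edgesM n (n+m-4) + ∑ i ∈ (S : Finset ℕ), Finsupp.single (trip (n+m-4) i) 1

/-- Exponent vector of the `P_n` map. -/
def eNmap (n N : ℕ) (S : ↥(PnIdx n)) : Finset ℕ →₀ ℕ :=
  edgesP n + ∑ i ∈ (S : Finset ℕ), Finsupp.single (trip N i) 1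

variable {K : Type*} [Field K]

lemma prod_X_single {ι V : Type*} (t : Finset ι) (a : ι → V) :
    (∏ i ∈ t, (X (a i) : MvPolynomial V K))
      = monomial (∑ i ∈ t, Finsupp.single (a i) 1) 1 := by
  classical
  induction t using Finset.cons_induction with
  | empty => simp
  | cons j t hj ih =>
      rw [Finset.prod_cons, Finset.sum_cons, ih, ← pow_one (X (a j)), X_pow_eq_monomial,
        monomial_mul, one_mul]

lemma psiC_X (N : ℕ) (S : ↥(CIdx N)) : psiC K N (X S) = monomial (eCmap N S) 1 := by
  rw [psiC, aeval_X, prod_X_single, prod_X_single, monomial_mul, one_mul, eCmap, edgesC]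

lemma psiPm_X (n m : ℕ) (S : ↥(PmIdx n m)) : psiPm K n m (X S) = monomial (eMmap n m S) 1 := by
  rw [psiPm, aeval_X, prod_X_single, prod_X_single, monomial_mul, one_mul, eMmap, edgesM]

lemma psiPn_X (n N : ℕ) (S : ↥(PnIdx n)) : psiPn K n N (X S) = monomial (eNmap n N S) 1 := by
  rw [psiPn, aeval_X, prod_X_single, prod_X_single, monomial_mul, one_mul, eNmap, edgesP]

/-- Structural decomposition of exponent maps of edge-plus-triples form. -/
lemma expo_structure {σ : Type*} (E : Finset ℕ →₀ ℕ) (F : σ → Finset ℕ) (N : ℕ) (u : σ →₀ ℕ) :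
    expo (fun s => E + ∑ i ∈ F s, Finsupp.single (trip N i) 1) u
      = (expo (fun _ : σ => (1:ℕ))) u • E
        + Finsupp.mapDomain (trip N) ((expo fun s => ∑ i ∈ F s, Finsupp.single i (1:ℕ)) u) := by
  classical
  induction u using Finsupp.induction with
  | zero => simp
  | single_add a b u _ _ ih =>
      rw [map_add, map_add, map_add, expo_single, expo_single, expo_single,
        Finsupp.mapDomain_add, ih, Finsupp.mapDomain_smul, Finsupp.mapDomain_finset_sum]
      simp_rw [Finsupp.mapDomain_single]
      rw [smul_add, add_smul, smul_eq_mul, mul_one]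
      abel

end AuxExponents


/-- for `m, n ≥ 4` the characteristic imset ideal of the cycle on
`n + m - 4` vertices is the quasi-independence gluing of the ideals of the two paths:
`I_{C_{n+m-4}} = I_{P'_m} ×_{Q_{m,n}} I_{P_n}`, where the variables `z_{S' ∪ S}` of the
cycle ideal are identified with the variables `z_{(S',S)}` of the gluing via the
splitting map `ρ`. -/
theorem stmt15 (K : Type*) [Field K] (n m : ℕ) (hn : 4 ≤ n) (hm : 4 ≤ m)
    (ρ : ↥(CIdx (n + m - 4)) → ↥(Qmn n m))
    (hρ : ∀ S : ↥(CIdx (n + m - 4)),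
      ((ρ S).1.1.1 ∪ (ρ S).1.2.1 : Finset ℕ) = S.1) :
    RingHom.ker (psiC K (n + m - 4)) =
      Ideal.comap (rename ρ)
        (QIG K (Qmn n m) (RingHom.ker (psiPm K n m))
          (RingHom.ker (psiPn K n (n + m - 4)))) := by
  classical
  have hN4 : 4 ≤ n + m - 4 := by omega
  have hnN : n ≤ n + m - 4 := by omega
  -- basic membership facts
  have hCmem : ∀ (S : ↥(CIdx (n+m-4))), ∀ i ∈ (S : Finset ℕ), 1 ≤ i ∧ i ≤ n+m-4 :=
    fun S => S.2.2.1
  have hMmem : ∀ (S : ↥(PmIdx n m)), ∀ i ∈ (S : Finset ℕ), i = 1 ∨ (n ≤ i ∧ i ≤ n+m-4) :=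
    fun S => S.2.1
  have hPmem : ∀ (S : ↥(PnIdx n)), ∀ i ∈ (S : Finset ℕ), 2 ≤ i ∧ i ≤ n-1 :=
    fun S => S.2.1
  -- the tensor-like target map and the composites
  set Ψ : MvPolynomial (↥(PmIdx n m) ⊕ ↥(PnIdx n)) K →ₐ[K] MvPolynomial (Finset ℕ ⊕ Finset ℕ) K :=
    aeval (Sum.elim (fun S : ↥(PmIdx n m) => rename Sum.inl (psiPm K n m (X S)))
      (fun S : ↥(PnIdx n) => rename Sum.inr (psiPn K n (n+m-4) (X S)))) with hΨ
  set φ : MvPolynomial (↥(CIdx (n+m-4))) K →ₐ[K]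
      MvPolynomial (↥(PmIdx n m) ⊕ ↥(PnIdx n)) K :=
    (phiQ K (Qmn n m)).comp (rename ρ) with hφ
  set χ : MvPolynomial (↥(CIdx (n+m-4))) K →ₐ[K] MvPolynomial (Finset ℕ ⊕ Finset ℕ) K :=
    Ψ.comp φ with hχ
  -- exponent vectors
  set eM' : ↥(CIdx (n+m-4)) → (Finset ℕ →₀ ℕ) := fun S => eMmap n m (ρ S).1.1 with heM'
  set eN' : ↥(CIdx (n+m-4)) → (Finset ℕ →₀ ℕ) := fun S => eNmap n (n+m-4) (ρ S).1.2 with heN'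
  set dχ : ↥(CIdx (n+m-4)) → ((Finset ℕ ⊕ Finset ℕ) →₀ ℕ) := fun S =>
    Finsupp.mapDomain Sum.inl (eM' S) + Finsupp.mapDomain Sum.inr (eN' S) with hdχ
  set gφ : ↥(CIdx (n+m-4)) → ((↥(PmIdx n m) ⊕ ↥(PnIdx n)) →₀ ℕ) := fun S =>
    Finsupp.single (Sum.inl (ρ S).1.1) 1 + Finsupp.single (Sum.inr (ρ S).1.2) 1 with hgφ
  -- the maps are monomial maps
  have hfC : ∀ S, psiC K (n+m-4) (X S) = monomial (eCmap (n+m-4) S) 1 := psiC_X _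
  have hfφ : ∀ S, φ (X S) = monomial (gφ S) 1 := by
    intro S
    rw [hφ, AlgHom.comp_apply, rename_X, phiQ, aeval_X, ← pow_one (X (Sum.inl (ρ S).1.1)),
      X_pow_eq_monomial, ← pow_one (X (Sum.inr (ρ S).1.2)), X_pow_eq_monomial,
      monomial_mul, one_mul, hgφ]
  have hfχ : ∀ S, χ (X S) = monomial (dχ S) 1 := by
    intro S
    rw [hχ, AlgHom.comp_apply, hφ, AlgHom.comp_apply, rename_X, phiQ, aeval_X, map_mul,
      hΨ, aeval_X, aeval_X, Sum.elim_inl, Sum.elim_inr, psiPm_X, psiPn_X,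
      rename_monomial, rename_monomial, monomial_mul, one_mul, hdχ, heM', heN']
  -- counting homomorphisms
  set degh : (↥(CIdx (n+m-4)) →₀ ℕ) →+ ℕ := expo (fun _ => (1:ℕ)) with hdegh
  set cntC : (↥(CIdx (n+m-4)) →₀ ℕ) →+ (ℕ →₀ ℕ) :=
    expo (fun S => ∑ i ∈ (S : Finset ℕ), Finsupp.single i (1:ℕ)) with hcntC
  set cntM : (↥(CIdx (n+m-4)) →₀ ℕ) →+ (ℕ →₀ ℕ) :=
    expo (fun S => ∑ i ∈ ((ρ S).1.1 : Finset ℕ), Finsupp.single i (1:ℕ)) with hcntM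
  set cntN : (↥(CIdx (n+m-4)) →₀ ℕ) →+ (ℕ →₀ ℕ) :=
    expo (fun S => ∑ i ∈ ((ρ S).1.2 : Finset ℕ), Finsupp.single i (1:ℕ)) with hcntN
  -- structure of the exponent maps
  have hEC : ∀ u, expo (eCmap (n+m-4)) u
      = degh u • edgesC (n+m-4) + Finsupp.mapDomain (trip (n+m-4)) (cntC u) :=
    fun u => expo_structure (σ := ↥(CIdx (n+m-4))) (edgesC (n+m-4)) (fun S => (S : Finset ℕ)) (n+m-4) u
  have hEM : ∀ u, expo eM' u
      = degh u • edgesM n (n+m-4) + Finsupp.mapDomain (trip (n+m-4)) (cntM u) :=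
    fun u => expo_structure (σ := ↥(CIdx (n+m-4))) (edgesM n (n+m-4)) (fun S => ((ρ S).1.1 : Finset ℕ)) (n+m-4) u
  have hEN : ∀ u, expo eN' u
      = degh u • edgesP n + Finsupp.mapDomain (trip (n+m-4)) (cntN u) :=
    fun u => expo_structure (σ := ↥(CIdx (n+m-4))) (edgesP n) (fun S => ((ρ S).1.2 : Finset ℕ)) (n+m-4) u
  -- supports of the counting vectors
  have hsuppC : ∀ u, (cntC u).support ⊆ Finset.Icc 1 (n+m-4) := by
    refine fun u => expo_support_subset (fun S => ?_) u
    refine (support_sum_single_subset _).trans fun i hi => ?_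
    have := hCmem S i hi
    simp only [Finset.mem_Icc]
    omega
  have hsuppM : ∀ u, (cntM u).support ⊆
      (Finset.Icc 1 (n+m-4)).filter (fun i => i = 1 ∨ n ≤ i) := by
    refine fun u => expo_support_subset (fun S => ?_) u
    refine (support_sum_single_subset _).trans fun i hi => ?_
    have := hMmem (ρ S).1.1 i hi
    simp only [Finset.mem_filter, Finset.mem_Icc]
    omega
  have hsuppN : ∀ u, (cntN u).support ⊆
      (Finset.Icc 1 (n+m-4)).filter (fun i => 2 ≤ i ∧ i ≤ n-1) := by
    refine fun u => expo_support_subset (fun S => ?_) u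
    refine (support_sum_single_subset _).trans fun i hi => ?_
    have := hPmem (ρ S).1.2 i hi
    simp only [Finset.mem_filter, Finset.mem_Icc]
    omega
  have hCzero : ∀ u i, ¬(1 ≤ i ∧ i ≤ n+m-4) → cntC u i = 0 := by
    intro u i hi
    refine Finsupp.notMem_support_iff.1 fun hmem => hi ?_
    have := hsuppC u hmem
    simpa [Finset.mem_Icc] using this
  have hMzero : ∀ u i, ¬((1 ≤ i ∧ i ≤ n+m-4) ∧ (i = 1 ∨ n ≤ i)) → cntM u i = 0 := by
    intro u i hi
    refine Finsupp.notMem_support_iff.1 fun hmem => hi ?_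
    have := hsuppM u hmem
    simpa [Finset.mem_filter, Finset.mem_Icc] using this
  have hNzero : ∀ u i, ¬((1 ≤ i ∧ i ≤ n+m-4) ∧ (2 ≤ i ∧ i ≤ n-1)) → cntN u i = 0 := by
    intro u i hi
    refine Finsupp.notMem_support_iff.1 fun hmem => hi ?_
    have := hsuppN u hmem
    simpa [Finset.mem_filter, Finset.mem_Icc] using this
  -- splitting of the counting vector
  have hsplit : ∀ u, cntC u = cntM u + cntN u := by
    refine fun u => expo_add_split _ _ _ (fun S => ?_) u
    have hdisj : Disjoint ((ρ S).1.1 : Finset ℕ) ((ρ S).1.2 : Finset ℕ) :=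
      Finset.disjoint_left.2 fun i h1 h2 => by
        have := hMmem (ρ S).1.1 i h1
        have := hPmem (ρ S).1.2 i h2
        omega
    rw [← hρ S, Finset.sum_union hdisj]
  -- evaluation lemmas
  have hdegC : ∀ u, expo (eCmap (n+m-4)) u {1,2} = degh u := by
    intro u
    rw [hEC u, Finsupp.add_apply, Finsupp.smul_apply, edgesC_12 hN4,
      mapDomain_apply_of_not_mem _ (fun a ha h => ?_), smul_eq_mul, mul_one, add_zero]
    have hb := hsuppC u ha
    simp only [Finset.mem_Icc] at hb
    exact pair_ne_trip hN4 (by omega) hb.1 hb.2 h.symm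
  have hdegM : ∀ u, expo eM' u {1,2} = degh u := by
    intro u
    rw [hEM u, Finsupp.add_apply, Finsupp.smul_apply, edgesM_12 hn hnN hN4,
      mapDomain_apply_of_not_mem _ (fun a ha h => ?_), smul_eq_mul, mul_one, add_zero]
    have hb := hsuppM u ha
    simp only [Finset.mem_filter, Finset.mem_Icc] at hb
    exact pair_ne_trip hN4 (by omega) hb.1.1 hb.1.2 h.symm
  have htripC : ∀ u i, 1 ≤ i → i ≤ n+m-4 →
      expo (eCmap (n+m-4)) u (trip (n+m-4) i) = cntC u i := by
    intro u i hi hi'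
    rw [hEC u, Finsupp.add_apply, Finsupp.smul_apply, edgesC_trip hN4 hi hi', smul_zero,
      zero_add, Finsupp.mapDomain_apply' (Set.Icc 1 (n+m-4)) _ ?_ (trip_injOn hN4)
        (Set.mem_Icc.2 ⟨hi, hi'⟩)]
    intro a ha
    have := hsuppC u ha
    simpa [Finset.mem_Icc, Set.mem_Icc] using this
  have htripM : ∀ u i, 1 ≤ i → i ≤ n+m-4 →
      expo eM' u (trip (n+m-4) i) = cntM u i := by
    intro u i hi hi'
    rw [hEM u, Finsupp.add_apply, Finsupp.smul_apply, edgesM_trip hN4 hi hi', smul_zero,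
      zero_add, Finsupp.mapDomain_apply' (Set.Icc 1 (n+m-4)) _ ?_ (trip_injOn hN4)
        (Set.mem_Icc.2 ⟨hi, hi'⟩)]
    intro a ha
    have := hsuppM u ha
    simp only [Finset.mem_coe, Finset.mem_filter, Finset.mem_Icc] at this
    simp only [Set.mem_Icc]
    omega
  have htripN : ∀ u i, 1 ≤ i → i ≤ n+m-4 →
      expo eN' u (trip (n+m-4) i) = cntN u i := by
    intro u i hi hi'
    rw [hEN u, Finsupp.add_apply, Finsupp.smul_apply, edgesP_trip hN4 hi hi', smul_zero,
      zero_add, Finsupp.mapDomain_apply' (Set.Icc 1 (n+m-4)) _ ?_ (trip_injOn hN4)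
        (Set.mem_Icc.2 ⟨hi, hi'⟩)]
    intro a ha
    have := hsuppN u ha
    simp only [Finset.mem_coe, Finset.mem_filter, Finset.mem_Icc] at this
    simp only [Set.mem_Icc]
    omega
  -- the forward combinatorial implication
  have hforward : ∀ u u', expo (eCmap (n+m-4)) u = expo (eCmap (n+m-4)) u' →
      expo eM' u = expo eM' u' ∧ expo eN' u = expo eN' u' := by
    intro u u' h
    have hdeg : degh u = degh u' := by rw [← hdegC u, ← hdegC u', h]
    have hcnt : cntC u = cntC u' := by
      ext i
      by_cases hi : 1 ≤ i ∧ i ≤ n+m-4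
      · rw [← htripC u i hi.1 hi.2, ← htripC u' i hi.1 hi.2, h]
      · rw [hCzero u i hi, hCzero u' i hi]
    have hcntM : cntM u = cntM u' := by
      ext i
      by_cases hc : (1 ≤ i ∧ i ≤ n+m-4) ∧ (i = 1 ∨ n ≤ i)
      · have e1 : cntN u i = 0 := hNzero u i (by omega)
        have e2 : cntN u' i = 0 := hNzero u' i (by omega)
        have q1 := DFunLike.congr_fun (hsplit u) i
        have q2 := DFunLike.congr_fun (hsplit u') i
        have q3 := DFunLike.congr_fun hcnt i
        simp only [Finsupp.add_apply] at q1 q2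
        omega
      · rw [hMzero u i hc, hMzero u' i hc]
    have hcntN : cntN u = cntN u' := by
      ext i
      by_cases hc : (1 ≤ i ∧ i ≤ n+m-4) ∧ (2 ≤ i ∧ i ≤ n-1)
      · have e1 : cntM u i = 0 := hMzero u i (by omega)
        have e2 : cntM u' i = 0 := hMzero u' i (by omega)
        have q1 := DFunLike.congr_fun (hsplit u) i
        have q2 := DFunLike.congr_fun (hsplit u') i
        have q3 := DFunLike.congr_fun hcnt i
        simp only [Finsupp.add_apply] at q1 q2
        omega
      · rw [hNzero u i hc, hNzero u' i hc]
    exact ⟨by rw [hEM u, hEM u', hdeg, hcntM], by rw [hEN u, hEN u', hdeg, hcntN]⟩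
  -- the backward combinatorial implication
  have hsplitχ : ∀ v, expo dχ v
      = Finsupp.mapDomain Sum.inl (expo eM' v) + Finsupp.mapDomain Sum.inr (expo eN' v) := by
    intro v
    calc expo dχ v
        = expo (fun S => (Finsupp.mapDomain.addMonoidHom Sum.inl) (eM' S)) v
          + expo (fun S => (Finsupp.mapDomain.addMonoidHom Sum.inr) (eN' S)) v :=
          expo_add_split _ _ _ (fun S => rfl) v
      _ = _ := by rw [expo_comp_addHom, expo_comp_addHom]; rfl
  have hback : ∀ u u', expo dχ u = expo dχ u' →
      expo (eCmap (n+m-4)) u = expo (eCmap (n+m-4)) u' := by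
    intro u u' h
    rw [hsplitχ u, hsplitχ u'] at h
    have hM : expo eM' u = expo eM' u' := by
      ext v
      have h1 := DFunLike.congr_fun h (Sum.inl v)
      simp only [Finsupp.add_apply] at h1
      rw [Finsupp.mapDomain_apply Sum.inl_injective, Finsupp.mapDomain_apply Sum.inl_injective,
        mapDomain_apply_of_not_mem _ (fun a _ hc => Sum.inr_ne_inl hc),
        mapDomain_apply_of_not_mem _ (fun a _ hc => Sum.inr_ne_inl hc)] at h1
      omega
    have hNN : expo eN' u = expo eN' u' := by
      ext v
      have h1 := DFunLike.congr_fun h (Sum.inr v)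
      simp only [Finsupp.add_apply] at h1
      rw [Finsupp.mapDomain_apply Sum.inr_injective, Finsupp.mapDomain_apply Sum.inr_injective,
        mapDomain_apply_of_not_mem _ (fun a _ hc => Sum.inl_ne_inr hc),
        mapDomain_apply_of_not_mem _ (fun a _ hc => Sum.inl_ne_inr hc)] at h1
      omega
    have hdeg : degh u = degh u' := by rw [← hdegM u, ← hdegM u', hM]
    have hcntM : cntM u = cntM u' := by
      ext i
      by_cases hi : 1 ≤ i ∧ i ≤ n+m-4
      · rw [← htripM u i hi.1 hi.2, ← htripM u' i hi.1 hi.2, hM]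
      · rw [hMzero u i (by omega), hMzero u' i (by omega)]
    have hcntN : cntN u = cntN u' := by
      ext i
      by_cases hi : 1 ≤ i ∧ i ≤ n+m-4
      · rw [← htripN u i hi.1 hi.2, ← htripN u' i hi.1 hi.2, hNN]
      · rw [hNzero u i (by omega), hNzero u' i (by omega)]
    rw [hEC u, hEC u', hdeg, hsplit, hsplit, hcntM, hcntN]
  -- now the two inclusions
  apply le_antisymm
  · -- `ker ψ_C ⊆` the gluing
    set m₁ : (↥(CIdx (n+m-4)) →₀ ℕ) →+ (↥(PmIdx n m) →₀ ℕ) :=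
      expo (fun S => Finsupp.single ((ρ S).1.1) (1:ℕ)) with hm₁
    set m₂ : (↥(CIdx (n+m-4)) →₀ ℕ) →+ (↥(PnIdx n) →₀ ℕ) :=
      expo (fun S => Finsupp.single ((ρ S).1.2) (1:ℕ)) with hm₂
    have hgφid : ∀ u, expo gφ u
        = Finsupp.mapDomain Sum.inl (m₁ u) + Finsupp.mapDomain Sum.inr (m₂ u) := by
      intro u
      calc expo gφ u
          = expo (fun S => (Finsupp.mapDomain.addMonoidHom (Sum.inl : ↥(PmIdx n m) →
              ↥(PmIdx n m) ⊕ ↥(PnIdx n))) (Finsupp.single ((ρ S).1.1) (1:ℕ))) u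
            + expo (fun S => (Finsupp.mapDomain.addMonoidHom (Sum.inr : ↥(PnIdx n) →
              ↥(PmIdx n m) ⊕ ↥(PnIdx n))) (Finsupp.single ((ρ S).1.2) (1:ℕ))) u := by
            refine expo_add_split _ _ _ (fun S => ?_) u
            show gφ S = Finsupp.mapDomain Sum.inl (Finsupp.single ((ρ S).1.1) 1)
              + Finsupp.mapDomain Sum.inr (Finsupp.single ((ρ S).1.2) 1)
            rw [Finsupp.mapDomain_single, Finsupp.mapDomain_single, hgφ]
        _ = _ := by rw [expo_comp_addHom, expo_comp_addHom]; rfl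
    have hm₁E : ∀ u, expo (eMmap n m) (m₁ u) = expo eM' u := fun u =>
      expo_expo_single (fun S => (ρ S).1.1) (eMmap n m) u
    have hm₂E : ∀ u, expo (eNmap n (n+m-4)) (m₂ u) = expo eN' u := fun u =>
      expo_expo_single (fun S => (ρ S).1.2) (eNmap n (n+m-4)) u
    refine ker_le_of_binomials (psiC K (n+m-4)) (eCmap (n+m-4)) hfC _ ?_
    intro u u' hud
    obtain ⟨hMeq, hNeq⟩ := hforward u u' hud
    rw [Ideal.mem_comap, QIG, Ideal.mem_comap]
    have hφb : (phiQ K (Qmn n m)) ((rename ρ) ((monomial u 1 : MvPolynomial _ K) - monomial u' 1))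
        = rename Sum.inl (monomial (m₁ u) 1) * rename Sum.inr (monomial (m₂ u) 1)
          - rename Sum.inl (monomial (m₁ u') 1) * rename Sum.inr (monomial (m₂ u') 1) := by
      have : (phiQ K (Qmn n m)) ((rename ρ) ((monomial u 1 : MvPolynomial _ K) - monomial u' 1))
          = φ ((monomial u 1 : MvPolynomial _ K) - monomial u' 1) := by rw [hφ]; rfl
      have hsplitmon : ∀ v : ↥(CIdx (n+m-4)) →₀ ℕ,
          (monomial (Finsupp.mapDomain Sum.inl (m₁ v) + Finsupp.mapDomain Sum.inr (m₂ v)) (1:K)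
            : MvPolynomial (↥(PmIdx n m) ⊕ ↥(PnIdx n)) K)
          = rename Sum.inl (monomial (m₁ v) 1) * rename Sum.inr (monomial (m₂ v) 1) := by
        intro v
        rw [rename_monomial, rename_monomial, monomial_mul, one_mul]
      rw [this, map_sub, alg_monomial φ gφ hfφ, alg_monomial φ gφ hfφ, hgφid u, hgφid u',
        hsplitmon, hsplitmon]
    have hker2 : ((monomial (m₂ u) 1 : MvPolynomial (↥(PnIdx n)) K) - monomial (m₂ u') 1)
        ∈ RingHom.ker (psiPn K n (n+m-4)) := by
      rw [RingHom.mem_ker, map_sub, alg_monomial _ (eNmap n (n+m-4)) (psiPn_X n (n+m-4)),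
        alg_monomial _ (eNmap n (n+m-4)) (psiPn_X n (n+m-4)), hm₂E, hm₂E, hNeq, sub_self]
    have hker1 : ((monomial (m₁ u) 1 : MvPolynomial (↥(PmIdx n m)) K) - monomial (m₁ u') 1)
        ∈ RingHom.ker (psiPm K n m) := by
      rw [RingHom.mem_ker, map_sub, alg_monomial _ (eMmap n m) (psiPm_X n m),
        alg_monomial _ (eMmap n m) (psiPm_X n m), hm₁E, hm₁E, hMeq, sub_self]
    rw [hφb]
    have hdecomp : rename Sum.inl (monomial (m₁ u) 1) * rename Sum.inr (monomial (m₂ u) 1)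
          - rename Sum.inl (monomial (m₁ u') 1) * rename Sum.inr (monomial (m₂ u') 1)
        = rename Sum.inl ((monomial (m₁ u) 1 : MvPolynomial (↥(PmIdx n m)) K))
            * (rename Sum.inr ((monomial (m₂ u) 1 : MvPolynomial (↥(PnIdx n)) K)
              - monomial (m₂ u') 1))
          + rename Sum.inr ((monomial (m₂ u') 1 : MvPolynomial (↥(PnIdx n)) K))
            * (rename Sum.inl ((monomial (m₁ u) 1 : MvPolynomial (↥(PmIdx n m)) K)
              - monomial (m₁ u') 1)) := by
      rw [map_sub, map_sub]
      ring
    rw [hdecomp]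
    refine Ideal.add_mem _ ?_ ?_
    · exact Submodule.mem_sup_right (Ideal.mul_mem_left _ _ (Ideal.mem_map_of_mem _ hker2))
    · exact Submodule.mem_sup_left (Ideal.mul_mem_left _ _ (Ideal.mem_map_of_mem _ hker1))
  · -- the gluing `⊆ ker ψ_C`
    intro p hp
    rw [Ideal.mem_comap, QIG, Ideal.mem_comap] at hp
    have h1 : Ideal.map (rename (Sum.inl : ↥(PmIdx n m) → ↥(PmIdx n m) ⊕ ↥(PnIdx n)))
        (RingHom.ker (psiPm K n m)) ≤ RingHom.ker Ψ := by
      rw [Ideal.map_le_iff_le_comap]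
      intro q hq
      rw [Ideal.mem_comap, RingHom.mem_ker]
      have hcomp : Ψ.comp (rename (Sum.inl : ↥(PmIdx n m) → ↥(PmIdx n m) ⊕ ↥(PnIdx n)))
          = (rename Sum.inl).comp (psiPm K n m) := by
        apply MvPolynomial.algHom_ext
        intro S
        simp [hΨ, aeval_X, rename_X]
      have : Ψ ((rename Sum.inl) q) = (rename Sum.inl) (psiPm K n m q) := by
        have := DFunLike.congr_fun hcomp q
        simpa using this
      rw [this, RingHom.mem_ker.1 hq, map_zero]
    have h2 : Ideal.map (rename (Sum.inr : ↥(PnIdx n) → ↥(PmIdx n m) ⊕ ↥(PnIdx n)))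
        (RingHom.ker (psiPn K n (n+m-4))) ≤ RingHom.ker Ψ := by
      rw [Ideal.map_le_iff_le_comap]
      intro q hq
      rw [Ideal.mem_comap, RingHom.mem_ker]
      have hcomp : Ψ.comp (rename (Sum.inr : ↥(PnIdx n) → ↥(PmIdx n m) ⊕ ↥(PnIdx n)))
          = (rename Sum.inr).comp (psiPn K n (n+m-4)) := by
        apply MvPolynomial.algHom_ext
        intro S
        simp [hΨ, aeval_X, rename_X]
      have : Ψ ((rename Sum.inr) q) = (rename Sum.inr) (psiPn K n (n+m-4) q) := by
        have := DFunLike.congr_fun hcomp q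
        simpa using this
      rw [this, RingHom.mem_ker.1 hq, map_zero]
    have hsum : Ideal.map (rename (Sum.inl : ↥(PmIdx n m) → ↥(PmIdx n m) ⊕ ↥(PnIdx n)))
          (RingHom.ker (psiPm K n m))
        + Ideal.map (rename (Sum.inr : ↥(PnIdx n) → ↥(PmIdx n m) ⊕ ↥(PnIdx n)))
          (RingHom.ker (psiPn K n (n+m-4))) ≤ RingHom.ker Ψ := by
      rw [Submodule.add_eq_sup]
      exact sup_le h1 h2
    have hχzero : χ p = 0 := by
      have : χ p = Ψ ((phiQ K (Qmn n m)) ((rename ρ) p)) := by rw [hχ, hφ]; rfl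
      rw [this]
      exact RingHom.mem_ker.1 (hsum hp)
    exact ker_refine (psiC K (n+m-4)) χ (eCmap (n+m-4)) dχ hfC hfχ hback
      (RingHom.mem_ker.2 hχzero)
end
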